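/- arXiv:2604.27831 — 10 statements merged into one kernel-verified Lean document; each statement's English description precedes it below -/
import Mathlib

section
/- Let P ≥ 1 and let J_1, …, J_P ≥ 1 be integers with J = J_1 + ⋯ + J_P, and let F = block-diag(1_{J_1}, …, 1_{J_P}) ∈ ℝ^{J×P}. Let H > 0, c > 0, σω² ≥ 0 and στ² ≥ 0 be real numbers. Then the J×J matrix (σω²/H)·1_J 1_Jᵀ + (στ²/H)·F Fᵀ + c·I_J is invertible, the P×P matrix (στ²/(cH))·I_P + (σω²/(cH))·1_P 1_Pᵀ + (FᵀF)⁻¹ is invertible, and Fᵀ [(σω²/H)·1_J 1_Jᵀ + (στ²/H)·F Fᵀ + c·I_J]⁻¹ F = (1/c)·[(στ²/(cH))·I_P + (σω²/(cH))·1_P 1_Pᵀ + (FᵀF)⁻¹]⁻¹. (Note FᵀF = diag(J_1, …, J_P) is invertible.) -/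
noncomputable section
open Matrix

/-- The all-ones square matrix. -/
def onesMat (ι : Type*) : Matrix ι ι ℝ := Matrix.of fun _ _ => 1

/-- The block-diagonal design matrix `F = block-diag(1_{J_1}, …, 1_{J_P})`:
its `i`-th column has ones exactly in the rows of the `i`-th block. -/
def Fmat (P : ℕ) (J : Fin P → ℕ) : Matrix ((i : Fin P) × Fin (J i)) (Fin P) ℝ :=
  Matrix.of fun r p => if r.1 = p then 1 else 0


lemma FtF (P : ℕ) (J : Fin P → ℕ) :
    (Fmat P J)ᵀ * Fmat P J = Matrix.diagonal (fun p => (J p : ℝ)) := by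
  ext p q
  simp only [Matrix.mul_apply, Fmat, transpose_apply, Matrix.of_apply, diagonal_apply]
  rw [← Finset.univ_sigma_univ, Finset.sum_sigma]
  simp only [ite_mul, one_mul, zero_mul]
  by_cases h : p = q
  · subst h
    simp [Finset.sum_ite_eq, Finset.sum_const]
  · rw [if_neg h]
    refine Finset.sum_eq_zero fun i _ => Finset.sum_eq_zero fun j _ => ?_
    by_cases hip : i = p
    · subst hip; simp [h]
    · simp [hip]

lemma FOF (P : ℕ) (J : Fin P → ℕ) :
    Fmat P J * onesMat (Fin P) * (Fmat P J)ᵀ = onesMat ((i : Fin P) × Fin (J i)) := by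
  ext r s
  simp only [Matrix.mul_apply, Fmat, onesMat, transpose_apply, Matrix.of_apply, mul_one]
  simp [Finset.sum_ite_eq', Finset.mul_sum]

lemma onesMat_posSemidef (ι : Type*) [Fintype ι] : (onesMat ι).PosSemidef := by
  rw [Matrix.posSemidef_iff_dotProduct_mulVec]
  constructor
  · ext i j; simp [onesMat, Matrix.conjTranspose_apply]
  · intro x
    have : star x ⬝ᵥ (onesMat ι *ᵥ x) = (∑ i, x i) * (∑ i, x i) := by
      simp [onesMat, dotProduct, mulVec, Finset.sum_mul, mul_comm]
    rw [this]
    exact mul_self_nonneg _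

lemma smul_posSemidef {ι : Type*} [Fintype ι] {a : ℝ} (ha : 0 ≤ a)
    {A : Matrix ι ι ℝ} (h : A.PosSemidef) : (a • A).PosSemidef := by
  rw [Matrix.posSemidef_iff_dotProduct_mulVec]
  constructor
  · ext i j
    have := congrFun (congrFun h.1 i) j
    simp only [Matrix.conjTranspose_apply, Matrix.smul_apply, star_trivial] at this ⊢
    rw [this]
  · intro x
    rw [Matrix.smul_mulVec, dotProduct_smul, smul_eq_mul]
    exact mul_nonneg ha (h.dotProduct_mulVec_nonneg x)


theorem stmt0 (P : ℕ) (hP : 1 ≤ P) (J : Fin P → ℕ) (hJ : ∀ i, 1 ≤ J i)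
    (H c sw st : ℝ) (hH : 0 < H) (hc : 0 < c) (hsw : 0 ≤ sw) (hst : 0 ≤ st)
    (W : Matrix ((i : Fin P) × Fin (J i)) ((i : Fin P) × Fin (J i)) ℝ)
    (hW : W = (sw / H) • onesMat ((i : Fin P) × Fin (J i))
        + (st / H) • (Fmat P J * (Fmat P J)ᵀ)
        + c • (1 : Matrix ((i : Fin P) × Fin (J i)) ((i : Fin P) × Fin (J i)) ℝ))
    (G : Matrix (Fin P) (Fin P) ℝ)
    (hG : G = (st / (c * H)) • (1 : Matrix (Fin P) (Fin P) ℝ)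
        + (sw / (c * H)) • onesMat (Fin P)
        + ((Fmat P J)ᵀ * Fmat P J)⁻¹) :
    IsUnit W ∧ IsUnit G ∧ (Fmat P J)ᵀ * W⁻¹ * Fmat P J = c⁻¹ • G⁻¹ := by
  set F := Fmat P J with hF
  set D : Matrix (Fin P) (Fin P) ℝ := Matrix.diagonal (fun p => (J p : ℝ)) with hD
  set M : Matrix (Fin P) (Fin P) ℝ :=
    (sw / H) • onesMat (Fin P) + (st / H) • (1 : Matrix (Fin P) (Fin P) ℝ) with hM
  have hFtF : Fᵀ * F = D := FtF P J
  -- D is invertible, with explicit inverse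
  have hJpos : ∀ p, (0 : ℝ) < (J p : ℝ) := fun p => by exact_mod_cast hJ p
  have hDinv_eq : D⁻¹ = Matrix.diagonal (fun p => ((J p : ℝ))⁻¹) := by
    refine Matrix.inv_eq_right_inv ?_
    rw [hD, Matrix.diagonal_mul_diagonal]
    rw [show (fun p => (J p : ℝ) * ((J p : ℝ))⁻¹) = fun _ => (1:ℝ) from
      funext fun p => mul_inv_cancel₀ (hJpos p).ne', Matrix.diagonal_one]
  have hDdet : IsUnit D.det := by
    rw [hD, Matrix.det_diagonal]
    exact (Finset.prod_pos fun p _ => hJpos p).ne'.isUnit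
  have hDinv : D * D⁻¹ = 1 := Matrix.mul_nonsing_inv _ hDdet
  have hDinvD : D⁻¹ * D = 1 := Matrix.nonsing_inv_mul _ hDdet
  -- W in factored form
  have hWs : W = F * M * Fᵀ + c • 1 := by
    have hFMF : F * M * Fᵀ = (sw / H) • (F * onesMat (Fin P) * Fᵀ) + (st / H) • (F * Fᵀ) := by
      rw [hM]
      simp [Matrix.mul_add, Matrix.add_mul, Matrix.mul_smul, Matrix.smul_mul, Matrix.mul_assoc]
    rw [hW, hFMF, FOF]
  -- M is PSD
  have hMpsd : M.PosSemidef := by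
    refine Matrix.PosSemidef.add (smul_posSemidef (by positivity) (onesMat_posSemidef _)) ?_
    exact smul_posSemidef (by positivity) (Matrix.PosDef.posSemidef Matrix.PosDef.one)
  -- W is PosDef
  have hcone : (c • (1 : Matrix ((i : Fin P) × Fin (J i)) ((i : Fin P) × Fin (J i)) ℝ)) =
      Matrix.diagonal (fun _ => c) := by
    ext i j
    by_cases h : i = j <;> simp [Matrix.one_apply, Matrix.diagonal_apply, h]
  have hWpd : W.PosDef := by
    rw [hWs]
    refine Matrix.PosDef.posSemidef_add ?_ ?_
    · have := Matrix.PosSemidef.mul_mul_conjTranspose_same hMpsd F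
      rwa [Matrix.conjTranspose_eq_transpose_of_trivial] at this
    · rw [hcone]; exact Matrix.PosDef.diagonal fun _ => hc
  have hWunit : IsUnit W := hWpd.isUnit
  have hWdet : IsUnit W.det := (Matrix.isUnit_iff_isUnit_det W).mp hWunit
  -- G in terms of M and D⁻¹
  have hGs : G = c⁻¹ • M + D⁻¹ := by
    rw [hG, hFtF, hM, smul_add, smul_smul, smul_smul]
    rw [show c⁻¹ * (sw / H) = sw / (c * H) by field_simp,
        show c⁻¹ * (st / H) = st / (c * H) by field_simp]
    abel
  -- D⁻¹ is PosDef
  have hDinvPD : (D⁻¹).PosDef := by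
    rw [hDinv_eq]
    exact Matrix.PosDef.diagonal fun p => inv_pos.mpr (hJpos p)
  have hGpd : G.PosDef := by
    rw [hGs]
    exact Matrix.PosDef.posSemidef_add (smul_posSemidef (by positivity) hMpsd) hDinvPD
  have hGunit : IsUnit G := hGpd.isUnit
  have hGdet : IsUnit G.det := (Matrix.isUnit_iff_isUnit_det G).mp hGunit
  have hGinv : G * G⁻¹ = 1 := Matrix.mul_nonsing_inv _ hGdet
  -- c • (D * G) = D * M + c • 1
  have hcDGeq : c • (D * G) = D * M + c • 1 := by
    rw [hGs, Matrix.mul_add, Matrix.mul_smul, smul_add, smul_smul,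
      mul_inv_cancel₀ hc.ne', one_smul, hDinv]
  -- key identity
  have hKey : Fᵀ * W = (c • (D * G)) * Fᵀ := by
    rw [hWs, Matrix.mul_add, ← Matrix.mul_assoc, ← Matrix.mul_assoc, hFtF,
      Matrix.mul_smul, Matrix.mul_one, hcDGeq, Matrix.add_mul, Matrix.smul_mul,
      Matrix.one_mul, Matrix.mul_assoc]
  -- invertibility of c • (D * G)
  have hcDGdet : IsUnit (c • (D * G)).det := by
    rw [Matrix.det_smul]
    exact (IsUnit.pow _ hc.ne'.isUnit).mul
      ((Matrix.isUnit_iff_isUnit_det _).mp (((Matrix.isUnit_iff_isUnit_det D).mpr hDdet).mul hGunit))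
  have hcDGinv' : (c • (D * G))⁻¹ * (c • (D * G)) = 1 := Matrix.nonsing_inv_mul _ hcDGdet
  have hWWinv : W * W⁻¹ = 1 := Matrix.mul_nonsing_inv _ hWdet
  -- Fᵀ * W⁻¹ = (c • (D * G))⁻¹ * Fᵀ
  have hstep : Fᵀ * W⁻¹ = (c • (D * G))⁻¹ * Fᵀ := by
    have h1 := congrArg (fun X => (c • (D * G))⁻¹ * X * W⁻¹) hKey
    simp only [Matrix.mul_assoc] at h1
    rw [hWWinv, Matrix.mul_one] at h1
    rw [← Matrix.mul_assoc, hcDGinv', Matrix.one_mul] at h1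
    exact h1.symm
  -- explicit inverse of c • (D * G)
  have hinv_cDG : (c • (D * G))⁻¹ = c⁻¹ • (G⁻¹ * D⁻¹) := by
    refine Matrix.inv_eq_right_inv ?_
    rw [Matrix.smul_mul, Matrix.mul_smul, smul_smul, mul_inv_cancel₀ hc.ne', one_smul,
      Matrix.mul_assoc D G _, ← Matrix.mul_assoc G G⁻¹ D⁻¹, hGinv, Matrix.one_mul, hDinv]
  refine ⟨hWunit, hGunit, ?_⟩
  rw [hstep, Matrix.mul_assoc, hFtF, hinv_cDG, Matrix.smul_mul, Matrix.mul_assoc,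
    hDinvD, Matrix.mul_one]
end
end

section
/- Let K ≥ 1 and P ≥ 1 be integers, let M and R̃ be symmetric positive definite P×P real matrices, and let Ũ be a symmetric positive definite (KP)×(KP) real matrix. Set T = I_K − (1/K)·1_K 1_Kᵀ, W = I_K ⊗ R̃ + (T ⊗ I_P) Ũ (T ⊗ I_P), and B = W⁻¹ (W is symmetric positive definite, hence invertible). Then the matrix T ⊗ (M⁻¹ + R̃)⁻¹ + Ũ⁻¹ is invertible, the matrix I_K ⊗ M + B is invertible, and {T ⊗ (M⁻¹ + R̃)⁻¹ + Ũ⁻¹}⁻¹ = Ũ − Ũ (T ⊗ I_P) B (T ⊗ I_P) Ũ + Ũ (T ⊗ I_P) B (I_K ⊗ M + B)⁻¹ B (T ⊗ I_P) Ũ. -/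
noncomputable section
open Matrix Kronecker

lemma one_kronecker_posDef {m n : Type*} [Fintype m] [Fintype n] [DecidableEq m] [DecidableEq n]
    {S : Matrix n n ℝ} (hS : S.PosDef) :
    ((1 : Matrix m m ℝ) ⊗ₖ S).PosDef := by
  have hsym : ∀ i j, S i j = S j i := fun i j => by
    conv_lhs => rw [← hS.isHermitian.eq]
    simp [conjTranspose_apply]
  rw [posDef_iff_dotProduct_mulVec]
  constructor
  · show _ = _
    ext ⟨a, b⟩ ⟨c, d⟩
    simp only [conjTranspose_apply, kroneckerMap_apply, star_trivial]
    rw [hsym d b]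
    rcases eq_or_ne a c with h | h
    · simp [Matrix.one_apply, h]
    · simp [Matrix.one_apply, h, h.symm]
  · intro x hx
    have key : dotProduct (star x) (((1 : Matrix m m ℝ) ⊗ₖ S) *ᵥ x)
        = ∑ k : m, dotProduct (star (fun p => x (k, p))) (S *ᵥ (fun p => x (k, p))) := by
      simp only [dotProduct, mulVec, Fintype.sum_prod_type, kroneckerMap_apply, one_apply,
        star_trivial, ite_mul, one_mul, zero_mul, Finset.sum_ite_irrel, Finset.sum_const_zero,
        Finset.sum_ite_eq, Finset.mem_univ, if_true]
    rw [key]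
    obtain ⟨⟨k₀, p₀⟩, hk₀⟩ : ∃ i, x i ≠ 0 := by
      by_contra h; push_neg at h; exact hx (funext h)
    refine Finset.sum_pos' (fun k _ => hS.posSemidef.dotProduct_mulVec_nonneg _)
      ⟨k₀, Finset.mem_univ _, hS.dotProduct_mulVec_pos ?_⟩
    intro h0
    exact hk₀ (congrFun h0 p₀)

theorem stmt1 (K P : ℕ) (hK : 1 ≤ K) (hP : 1 ≤ P)
    (M R : Matrix (Fin P) (Fin P) ℝ) (hM : M.PosDef) (hR : R.PosDef)
    (U : Matrix (Fin K × Fin P) (Fin K × Fin P) ℝ) (hU : U.PosDef)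
    (T : Matrix (Fin K) (Fin K) ℝ)
    (hT : T = 1 - (K : ℝ)⁻¹ • onesMat (Fin K))
    (W : Matrix (Fin K × Fin P) (Fin K × Fin P) ℝ)
    (hW : W = (1 : Matrix (Fin K) (Fin K) ℝ) ⊗ₖ R
        + (T ⊗ₖ (1 : Matrix (Fin P) (Fin P) ℝ)) * U * (T ⊗ₖ (1 : Matrix (Fin P) (Fin P) ℝ)))
    (B : Matrix (Fin K × Fin P) (Fin K × Fin P) ℝ) (hB : B = W⁻¹) :
    IsUnit (T ⊗ₖ (M⁻¹ + R)⁻¹ + U⁻¹) ∧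
    IsUnit ((1 : Matrix (Fin K) (Fin K) ℝ) ⊗ₖ M + B) ∧
    (T ⊗ₖ (M⁻¹ + R)⁻¹ + U⁻¹)⁻¹
      = U - U * (T ⊗ₖ (1 : Matrix (Fin P) (Fin P) ℝ)) * B
            * (T ⊗ₖ (1 : Matrix (Fin P) (Fin P) ℝ)) * U
        + U * (T ⊗ₖ (1 : Matrix (Fin P) (Fin P) ℝ)) * B
            * ((1 : Matrix (Fin K) (Fin K) ℝ) ⊗ₖ M + B)⁻¹ * B
            * (T ⊗ₖ (1 : Matrix (Fin P) (Fin P) ℝ)) * U := by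
  have hK0 : (K : ℝ) ≠ 0 := Nat.cast_ne_zero.mpr (by omega)
  set Q : Matrix (Fin K × Fin P) (Fin K × Fin P) ℝ :=
    T ⊗ₖ (1 : Matrix (Fin P) (Fin P) ℝ) with hQ
  -- T is idempotent
  have hJ : onesMat (Fin K) * onesMat (Fin K) = (K : ℝ) • onesMat (Fin K) := by
    ext i j
    simp [onesMat, Matrix.mul_apply]
  have hTT : T * T = T := by
    rw [hT]
    have hX : ((K : ℝ)⁻¹ • onesMat (Fin K)) * ((K : ℝ)⁻¹ • onesMat (Fin K))
        = (K : ℝ)⁻¹ • onesMat (Fin K) := by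
      rw [smul_mul_assoc, mul_smul_comm, hJ, smul_smul, smul_smul]
      congr 1
      field_simp
    rw [sub_mul, one_mul, mul_sub, mul_one, hX]
    abel
  -- symmetry facts
  have hTt : Tᵀ = T := by
    rw [hT, transpose_sub, transpose_one, transpose_smul]
    congr 1
  have hQH : Qᴴ = Q := by
    ext ⟨a, b⟩ ⟨c, d⟩
    simp only [hQ, conjTranspose_apply, kroneckerMap_apply, star_trivial]
    have hTac : T c a = T a c := by
      conv_lhs => rw [← hTt]
      rfl
    rw [hTac]
    rcases eq_or_ne b d with h | h
    · simp [Matrix.one_apply, h]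
    · simp [Matrix.one_apply, h, h.symm]
  -- key multiplicative identities for Q
  have hQ2 : Q * Q = Q := by
    rw [hQ, ← mul_kronecker_mul, hTT, one_mul]
  -- positive definiteness of the main players
  have hS : (M⁻¹ + R).PosDef := hM.inv.add hR
  have hQUQ : (Q * U * Q).PosSemidef := by
    have h := hU.posSemidef.mul_mul_conjTranspose_same Q
    rwa [hQH] at h
  have hWpd : W.PosDef := by
    rw [hW]
    exact (one_kronecker_posDef hR).add_posSemidef hQUQ
  have hBpd : B.PosDef := hB ▸ hWpd.inv
  set X : Matrix (Fin K × Fin P) (Fin K × Fin P) ℝ :=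
    (1 : Matrix (Fin K) (Fin K) ℝ) ⊗ₖ M⁻¹ + W with hXdef
  have hXpd : X.PosDef := (one_kronecker_posDef hM.inv).add hWpd
  have hGpd : ((1 : Matrix (Fin K) (Fin K) ℝ) ⊗ₖ M + B).PosDef :=
    (one_kronecker_posDef hM).add hBpd
  -- T ⊗ (M⁻¹+R)⁻¹ rewritten with Q
  have hTS : T ⊗ₖ (M⁻¹ + R)⁻¹
      = Q * ((1 : Matrix (Fin K) (Fin K) ℝ) ⊗ₖ (M⁻¹ + R)⁻¹) * Q := by
    rw [hQ, ← mul_kronecker_mul, ← mul_kronecker_mul]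
    simp only [Matrix.mul_one, Matrix.one_mul]
    rw [hTT]
  have hApd : (T ⊗ₖ (M⁻¹ + R)⁻¹ + U⁻¹).PosDef := by
    rw [hTS]
    have h := (one_kronecker_posDef (m := Fin K) hS.inv).posSemidef.mul_mul_conjTranspose_same Q
    rw [hQH] at h
    exact Matrix.PosDef.posSemidef_add h hU.inv
  refine ⟨hApd.isUnit, hGpd.isUnit, ?_⟩
  -- determinant units
  have hUdet : IsUnit U.det := (Matrix.isUnit_iff_isUnit_det U).mp hU.isUnit
  have hWdet : IsUnit W.det := (Matrix.isUnit_iff_isUnit_det W).mp hWpd.isUnit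
  have hXdet : IsUnit X.det := (Matrix.isUnit_iff_isUnit_det X).mp hXpd.isUnit
  have hGdet : IsUnit ((1 : Matrix (Fin K) (Fin K) ℝ) ⊗ₖ M + B).det :=
    (Matrix.isUnit_iff_isUnit_det _).mp hGpd.isUnit
  have hMdet : IsUnit M.det := (Matrix.isUnit_iff_isUnit_det M).mp hM.isUnit
  have hSdet : IsUnit (M⁻¹ + R).det := (Matrix.isUnit_iff_isUnit_det _).mp hS.isUnit
  set N : Matrix (Fin K × Fin P) (Fin K × Fin P) ℝ :=
    (1 : Matrix (Fin K) (Fin K) ℝ) ⊗ₖ M⁻¹ with hN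
  set N' : Matrix (Fin K × Fin P) (Fin K × Fin P) ℝ :=
    (1 : Matrix (Fin K) (Fin K) ℝ) ⊗ₖ M with hN'
  set G : Matrix (Fin K × Fin P) (Fin K × Fin P) ℝ := (N' + B)⁻¹ with hG
  set Cinv : Matrix (Fin K × Fin P) (Fin K × Fin P) ℝ :=
    (1 : Matrix (Fin K) (Fin K) ℝ) ⊗ₖ (M⁻¹ + R)⁻¹ with hCinv
  set C' : Matrix (Fin K × Fin P) (Fin K × Fin P) ℝ :=
    (1 : Matrix (Fin K) (Fin K) ℝ) ⊗ₖ (M⁻¹ + R) with hC'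
  have hNN' : N * N' = 1 := by
    rw [hN, hN', ← mul_kronecker_mul, Matrix.one_mul, Matrix.nonsing_inv_mul M hMdet,
      one_kronecker_one]
  have hCinvC' : Cinv * C' = 1 := by
    rw [hCinv, hC', ← mul_kronecker_mul, Matrix.one_mul,
      Matrix.nonsing_inv_mul _ hSdet, one_kronecker_one]
  have hWB : W * B = 1 := by rw [hB]; exact Matrix.mul_nonsing_inv W hWdet
  have hG1 : (N' + B) * G = 1 := Matrix.mul_nonsing_inv _ hGdet
  have hXY : X * X⁻¹ = 1 := Matrix.mul_nonsing_inv X hXdet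
  -- First Woodbury-type step: X⁻¹ = B - B G B
  have hXinv : X⁻¹ = B - B * G * B := by
    apply Matrix.inv_eq_right_inv
    calc X * (B - B * G * B)
        = (N * B + W * B) * (1 - G * B) := by rw [hXdef]; noncomm_ring
      _ = (N * B + 1) * (1 - G * B) := by rw [hWB]
      _ = (N * (N' + B)) * (1 - G * B) := by rw [mul_add, hNN', add_comm]
      _ = N * ((N' + B) - (N' + B) * G * B) := by noncomm_ring
      _ = N * ((N' + B) - B) := by rw [hG1, one_mul]
      _ = 1 := by rw [add_sub_cancel_right, hNN']
  -- Second Woodbury-type step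
  have hXeq : Q * U * Q + C' = X := by
    rw [hC', kronecker_add, hXdef, hW, hN]
    abel
  have hQmess : (Q * U * Q + C') * (X⁻¹ * (Q * U)) = Q * U := by
    rw [hXeq, ← mul_assoc, hXY, one_mul]
  have hUiU : U⁻¹ * U = 1 := Matrix.nonsing_inv_mul U hUdet
  have hAinv : (T ⊗ₖ (M⁻¹ + R)⁻¹ + U⁻¹)⁻¹ = U - U * Q * X⁻¹ * Q * U := by
    apply Matrix.inv_eq_right_inv
    rw [hTS]
    have hQY : Q * (X⁻¹ * (Q * U)) = Q * (Cinv * (C' * (X⁻¹ * (Q * U)))) := by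
      rw [show Q * (Cinv * (C' * (X⁻¹ * (Q * U)))) = Q * ((Cinv * C') * (X⁻¹ * (Q * U))) by
        noncomm_ring, hCinvC', one_mul]
    calc (Q * Cinv * Q + U⁻¹) * (U - U * Q * X⁻¹ * Q * U)
        = Q * (Cinv * (Q * U)) + U⁻¹ * U
          - Q * (Cinv * ((Q * U * Q) * (X⁻¹ * (Q * U))))
          - (U⁻¹ * U) * (Q * (X⁻¹ * (Q * U))) := by noncomm_ring
      _ = Q * (Cinv * (Q * U)) + 1
          - Q * (Cinv * ((Q * U * Q) * (X⁻¹ * (Q * U))))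
          - Q * (Cinv * (C' * (X⁻¹ * (Q * U)))) := by rw [hUiU, one_mul, hQY]
      _ = 1 + Q * (Cinv * (Q * U - (Q * U * Q + C') * (X⁻¹ * (Q * U)))) := by noncomm_ring
      _ = 1 := by rw [hQmess, sub_self, mul_zero, mul_zero, add_zero]
  rw [hAinv, hXinv]
  noncomm_ring
end
end

section
/- Let K ≥ 1 and P ≥ 1 be integers, let M and R̃ be symmetric positive definite P×P real matrices, let Ũ be a symmetric positive definite (KP)×(KP) real matrix, and let L = diag(ℓ_1, …, ℓ_P) be a diagonal P×P matrix with ℓ_i ≥ 0. Set T = I_K − (1/K)·1_K 1_Kᵀ, B = [I_K ⊗ R̃ + (T ⊗ I_P) Ũ (T ⊗ I_P)]⁻¹, C_1 = Ũ − Ũ (T ⊗ I_P) B (T ⊗ I_P) Ũ, and 𝐇 = B (T ⊗ I_P) Ũ (I_K ⊗ L) Ũ (T ⊗ I_P) B. Then tr({T ⊗ (M⁻¹ + R̃)⁻¹ + Ũ⁻¹}⁻¹ · (I_K ⊗ L)) = tr(C_1 (I_K ⊗ L)) + tr[(I_K ⊗ M + B)⁻¹ 𝐇]. -/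
noncomputable section
open Matrix Kronecker

lemma kron_isHermitian {m n : Type*} [Fintype m] [Fintype n]
    {T : Matrix m m ℝ} {A : Matrix n n ℝ} (hT : T.IsHermitian) (hA : A.IsHermitian) :
    (T ⊗ₖ A).IsHermitian := by
  ext ⟨i, j⟩ ⟨i', j'⟩
  simp only [conjTranspose_apply, kroneckerMap_apply, star_trivial]
  rw [← hT.apply i i', ← hA.apply j j']
  simp

lemma one_kron_posDef {K P : ℕ} {A : Matrix (Fin P) (Fin P) ℝ} (hA : A.PosDef) :
    ((1 : Matrix (Fin K) (Fin K) ℝ) ⊗ₖ A).PosDef := by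
  refine PosDef.of_dotProduct_mulVec_pos (kron_isHermitian Matrix.isHermitian_one hA.1) fun x hx => ?_
  have key : dotProduct (star x) (((1 : Matrix (Fin K) (Fin K) ℝ) ⊗ₖ A) *ᵥ x)
      = ∑ k : Fin K, dotProduct (star fun p => x (k, p)) (A *ᵥ fun p => x (k, p)) := by
    simp only [dotProduct, mulVec, Fintype.sum_prod_type, kroneckerMap_apply, one_apply,
      star_trivial, ite_mul, one_mul, zero_mul, Finset.sum_ite_irrel, Finset.sum_const_zero,
      Finset.sum_ite_eq, Finset.mem_univ, if_true]
  rw [key]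
  have hex : ∃ k, (fun p => x (k, p)) ≠ 0 := by
    by_contra h
    push_neg at h
    exact hx (funext fun kp => congrFun (h kp.1) kp.2)
  obtain ⟨k, hk⟩ := hex
  exact Finset.sum_pos' (fun i _ => hA.posSemidef.dotProduct_mulVec_nonneg _) ⟨k, Finset.mem_univ k, hA.dotProduct_mulVec_pos hk⟩

theorem stmt2 (K P : ℕ) (hK : 1 ≤ K) (hP : 1 ≤ P)
    (M R : Matrix (Fin P) (Fin P) ℝ) (hM : M.PosDef) (hR : R.PosDef)
    (U : Matrix (Fin K × Fin P) (Fin K × Fin P) ℝ) (hU : U.PosDef)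
    (ℓ : Fin P → ℝ) (hℓ : ∀ i, 0 ≤ ℓ i)
    (L : Matrix (Fin P) (Fin P) ℝ) (hL : L = Matrix.diagonal ℓ)
    (T : Matrix (Fin K) (Fin K) ℝ)
    (hT : T = 1 - (K : ℝ)⁻¹ • onesMat (Fin K))
    (B : Matrix (Fin K × Fin P) (Fin K × Fin P) ℝ)
    (hB : B = ((1 : Matrix (Fin K) (Fin K) ℝ) ⊗ₖ R
        + (T ⊗ₖ (1 : Matrix (Fin P) (Fin P) ℝ)) * U
            * (T ⊗ₖ (1 : Matrix (Fin P) (Fin P) ℝ)))⁻¹)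
    (C1 : Matrix (Fin K × Fin P) (Fin K × Fin P) ℝ)
    (hC1 : C1 = U - U * (T ⊗ₖ (1 : Matrix (Fin P) (Fin P) ℝ)) * B
        * (T ⊗ₖ (1 : Matrix (Fin P) (Fin P) ℝ)) * U)
    (Hm : Matrix (Fin K × Fin P) (Fin K × Fin P) ℝ)
    (hHm : Hm = B * (T ⊗ₖ (1 : Matrix (Fin P) (Fin P) ℝ)) * U
        * ((1 : Matrix (Fin K) (Fin K) ℝ) ⊗ₖ L) * U
        * (T ⊗ₖ (1 : Matrix (Fin P) (Fin P) ℝ)) * B) :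
    trace ((T ⊗ₖ (M⁻¹ + R)⁻¹ + U⁻¹)⁻¹ * ((1 : Matrix (Fin K) (Fin K) ℝ) ⊗ₖ L))
      = trace (C1 * ((1 : Matrix (Fin K) (Fin K) ℝ) ⊗ₖ L))
        + trace (((1 : Matrix (Fin K) (Fin K) ℝ) ⊗ₖ M + B)⁻¹ * Hm) := by
  set T' : Matrix (Fin K × Fin P) (Fin K × Fin P) ℝ :=
    T ⊗ₖ (1 : Matrix (Fin P) (Fin P) ℝ) with hT'
  set A : Matrix (Fin P) (Fin P) ℝ := M⁻¹ + R with hAdef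
  set G : Matrix (Fin K × Fin P) (Fin K × Fin P) ℝ :=
    (1 : Matrix (Fin K) (Fin K) ℝ) ⊗ₖ A⁻¹ with hGdef
  set S : Matrix (Fin K × Fin P) (Fin K × Fin P) ℝ :=
    (1 : Matrix (Fin K) (Fin K) ℝ) ⊗ₖ A + T' * U * T' with hSdef
  set W : Matrix (Fin K × Fin P) (Fin K × Fin P) ℝ :=
    (1 : Matrix (Fin K) (Fin K) ℝ) ⊗ₖ M + B with hWdef
  -- basic facts
  have hApd : A.PosDef := hM.inv.add hR
  have hTT : T * T = T := by
    have hK0 : (K:ℝ) ≠ 0 := Nat.cast_ne_zero.mpr (by omega)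
    have hJ : onesMat (Fin K) * onesMat (Fin K) = (K:ℝ) • onesMat (Fin K) := by
      ext i j; simp [onesMat, Matrix.mul_apply, Matrix.smul_apply]
    rw [hT, sub_mul, one_mul, mul_sub, mul_one, smul_mul_assoc, mul_smul_comm, hJ,
      smul_smul, smul_smul, mul_assoc, inv_mul_cancel₀ hK0, mul_one]
    abel
  have hTH : T.IsHermitian := by
    rw [hT]; ext i j
    simp [onesMat, conjTranspose_apply, one_apply, Matrix.sub_apply, eq_comm]
  have hT'H : T'ᴴ = T' := kron_isHermitian hTH Matrix.isHermitian_one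
  have hT'T' : T' * T' = T' := by
    rw [hT', ← Matrix.mul_kronecker_mul, hTT, Matrix.one_mul]
  have hSand : (T' * U * T').PosSemidef := by
    have h := hU.posSemidef.mul_mul_conjTranspose_same T'
    rwa [hT'H] at h
  have hSpd : S.PosDef := (one_kron_posDef hApd).add_posSemidef hSand
  have hBinvpd : ((1 : Matrix (Fin K) (Fin K) ℝ) ⊗ₖ R + T' * U * T').PosDef :=
    (one_kron_posDef hR).add_posSemidef hSand
  have hBpd : B.PosDef := by rw [hB]; exact hBinvpd.inv
  have hWpd : W.PosDef := (one_kron_posDef hM).add hBpd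
  have hGpd : G.PosDef := one_kron_posDef hApd.inv
  have hGinv : G⁻¹ = (1 : Matrix (Fin K) (Fin K) ℝ) ⊗ₖ A := by
    rw [hGdef, Matrix.inv_kronecker, inv_one,
      Matrix.nonsing_inv_nonsing_inv _ ((Matrix.isUnit_iff_isUnit_det _).mp hApd.isUnit)]
  have hUinvinv : U⁻¹⁻¹ = U :=
    Matrix.nonsing_inv_nonsing_inv _ ((Matrix.isUnit_iff_isUnit_det _).mp hU.isUnit)
  have hTkron : T ⊗ₖ A⁻¹ = T' * G * T' := by
    rw [hT', hGdef, ← Matrix.mul_kronecker_mul, ← Matrix.mul_kronecker_mul,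
      Matrix.mul_one, Matrix.one_mul, Matrix.mul_one, hTT]
  -- Woodbury 1
  have w1 : (T ⊗ₖ A⁻¹ + U⁻¹)⁻¹ = U - U * T' * S⁻¹ * T' * U := by
    have h := Matrix.add_mul_mul_inv_eq_sub U⁻¹ T' G T' hU.inv.isUnit hGpd.isUnit
      (by rw [hGinv, hUinvinv]; exact hSpd.isUnit)
    rw [hUinvinv, hGinv] at h
    rw [hTkron, add_comm, h, hSdef]
  -- Woodbury 2
  have hMinvinv : ((1 : Matrix (Fin K) (Fin K) ℝ) ⊗ₖ M⁻¹)⁻¹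
      = (1 : Matrix (Fin K) (Fin K) ℝ) ⊗ₖ M := by
    rw [Matrix.inv_kronecker, inv_one,
      Matrix.nonsing_inv_nonsing_inv _ ((Matrix.isUnit_iff_isUnit_det _).mp hM.isUnit)]
  have hSsplit : S = ((1 : Matrix (Fin K) (Fin K) ℝ) ⊗ₖ R + T' * U * T')
      + 1 * ((1 : Matrix (Fin K) (Fin K) ℝ) ⊗ₖ M⁻¹) * 1 := by
    rw [hSdef, hAdef, Matrix.kronecker_add, Matrix.one_mul, Matrix.mul_one]
    abel
  have w2 : S⁻¹ = B - B * W⁻¹ * B := by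
    have h := Matrix.add_mul_mul_inv_eq_sub
      ((1 : Matrix (Fin K) (Fin K) ℝ) ⊗ₖ R + T' * U * T') 1
      ((1 : Matrix (Fin K) (Fin K) ℝ) ⊗ₖ M⁻¹) 1
      hBinvpd.isUnit (one_kron_posDef hM.inv).isUnit
      (by rw [hMinvinv, Matrix.one_mul, Matrix.mul_one, ← hB, ← hWdef]; exact hWpd.isUnit)
    simp only [Matrix.one_mul, Matrix.mul_one] at h hSsplit
    rw [← hB, hMinvinv, ← hWdef] at h
    rw [hSsplit, h]
  -- combine
  have final : (T ⊗ₖ A⁻¹ + U⁻¹)⁻¹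
      = C1 + U * T' * B * W⁻¹ * (B * T' * U) := by
    rw [w1, w2, hC1]
    noncomm_ring
  rw [final, add_mul, trace_add]
  congr 1
  have e2 : U * T' * B * W⁻¹ * (B * T' * U) * ((1 : Matrix (Fin K) (Fin K) ℝ) ⊗ₖ L)
      = (U * T' * B * W⁻¹) * (B * T' * U * ((1 : Matrix (Fin K) (Fin K) ℝ) ⊗ₖ L)) := by
    noncomm_ring
  rw [e2, trace_mul_comm]
  have e3 : B * T' * U * ((1 : Matrix (Fin K) (Fin K) ℝ) ⊗ₖ L) * (U * T' * B * W⁻¹)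
      = Hm * W⁻¹ := by
    rw [hHm]; noncomm_ring
  rw [e3, trace_mul_comm, hWdef]
end
end

section
/- Let K ≥ 2 and P ≥ 1 be integers, n = K(K−1)/2, let M and R̃ be symmetric positive definite P×P real matrices, let Ũ be a symmetric positive definite (KP)×(KP) real matrix, and let L = diag(ℓ_1, …, ℓ_P) with ℓ_i ≥ 0. Set T = I_K − (1/K)·1_K 1_Kᵀ, B = [I_K ⊗ R̃ + (T ⊗ I_P) Ũ (T ⊗ I_P)]⁻¹, C_1 = Ũ − Ũ (T ⊗ I_P) B (T ⊗ I_P) Ũ, and H̃ = B (T ⊗ I_P) Ũ (T ⊗ L) Ũ (T ⊗ I_P) B, and let 𝒞 be the n×K pairwise-contrast matrix whose rows are e_kᵀ − e_{k'}ᵀ for 1 ≤ k < k' ≤ K. Then tr[(𝒞 ⊗ I_P) {T ⊗ (M⁻¹ + R̃)⁻¹ + Ũ⁻¹}⁻¹ (𝒞ᵀ ⊗ I_P) (I_n ⊗ L)] = K·{tr(C_1 (T ⊗ L)) + tr[(I_K ⊗ M + B)⁻¹ H̃]}. -/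
noncomputable section
open Matrix Kronecker

/-- The pairwise-contrast matrix whose rows, indexed by the pairs `k < k'`,
are the vectors `e_kᵀ − e_{k'}ᵀ`. -/
def Cmat (K : ℕ) : Matrix {p : Fin K × Fin K // p.1 < p.2} (Fin K) ℝ :=
  Matrix.of fun q j => (if j = q.1.1 then (1 : ℝ) else 0) - (if j = q.1.2 then 1 else 0)

lemma auxRing1 {α : Type*} [Ring α] (Q A G' U u : α)
    (hA : A * (Q * U) = G' * (Q * U) + A * (Q * U * Q) * (G' * (Q * U)))
    (hu : u * U = 1) :
    (Q * A * Q + u) * (U - U * Q * G' * (Q * U)) = 1 := by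
  have h1 : (Q * A * Q + u) * (U - U * Q * G' * (Q * U))
      = Q * (A * (Q * U)) - Q * (A * (Q * U * Q) * (G' * (Q * U))) + (u * U)
        - (u * U) * (Q * G' * (Q * U)) := by noncomm_ring
  rw [h1, hA, hu]
  noncomm_ring

lemma auxRing2 {α : Type*} [Ring α] (G m b d' : α)
    (hGb : G * b = m * b + 1)
    (hm : m * b = d' * b + m * (b * d') * b) :
    G * (b - b * (d' * b)) = 1 := by
  have h1 : G * (b - b * (d' * b)) = (G * b) - (G * b) * (d' * b) := by noncomm_ring
  rw [h1, hGb]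
  have h2 : (m * b + 1) - (m * b + 1) * (d' * b) = m * b + 1 - m * (b * d') * b - d' * b := by
    noncomm_ring
  rw [h2, hm]
  noncomm_ring

lemma kronOnePosDef {K P : ℕ} {X : Matrix (Fin P) (Fin P) ℝ} (hX : X.PosDef) :
    ((1 : Matrix (Fin K) (Fin K) ℝ) ⊗ₖ X).PosDef := by
  have hX' : ∀ p q, X p q = X q p := fun p q => by
    have := congrFun (congrFun hX.1 p) q
    simpa [conjTranspose_apply] using this.symm
  refine Matrix.PosDef.of_dotProduct_mulVec_pos ?_ ?_
  · show _ = _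
    ext ⟨a,b⟩ ⟨c,d⟩
    simp only [conjTranspose_apply, kroneckerMap_apply, star_trivial]
    rw [hX' d b]
    congr 1
    simp [Matrix.one_apply, eq_comm]
  · intro x hx
    have key : star x ⬝ᵥ ((1 : Matrix (Fin K) (Fin K) ℝ) ⊗ₖ X) *ᵥ x
        = ∑ k : Fin K, star (fun p => x (k,p)) ⬝ᵥ X *ᵥ (fun p => x (k,p)) := by
      simp only [dotProduct, mulVec, kroneckerMap_apply, Matrix.one_apply, Fintype.sum_prod_type,
        Pi.star_apply, star_trivial, ite_mul, one_mul, zero_mul]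
      congr 1; funext k; congr 1; funext p
      rw [Finset.sum_comm]
      simp [Finset.sum_ite_eq, Finset.mul_sum]
    rw [key]
    obtain ⟨⟨k0, p0⟩, hkp⟩ : ∃ kp, x kp ≠ 0 := by
      by_contra h; push_neg at h; exact hx (funext fun kp => h kp)
    apply Finset.sum_pos'
    · intro k _; exact hX.posSemidef.dotProduct_mulVec_nonneg _
    · exact ⟨k0, Finset.mem_univ _, hX.dotProduct_mulVec_pos (fun h => hkp (congrFun h p0))⟩

lemma cmat_mul (K : ℕ) (hK : 2 ≤ K) :
    (Cmat K)ᵀ * Cmat K = (K : ℝ) • (1 - (K : ℝ)⁻¹ • onesMat (Fin K)) := by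
  have hK0 : (K : ℝ) ≠ 0 := by positivity
  ext j j'
  set F : Fin K × Fin K → ℝ := fun p =>
    ((if j = p.1 then (1:ℝ) else 0) - (if j = p.2 then 1 else 0)) *
    ((if j' = p.1 then (1:ℝ) else 0) - (if j' = p.2 then 1 else 0)) with hF
  have lhs_eq : ((Cmat K)ᵀ * Cmat K) j j'
      = ∑ q : {p : Fin K × Fin K // p.1 < p.2}, F q.1 := by
    simp [Matrix.mul_apply, Cmat, transpose_apply, hF]
  have h1 : ∑ q : {p : Fin K × Fin K // p.1 < p.2}, F q.1
      = ∑ p ∈ Finset.univ.filter (fun p : Fin K × Fin K => p.1 < p.2), F p := by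
    rw [← Finset.sum_subtype (Finset.univ.filter (fun p : Fin K × Fin K => p.1 < p.2))
      (by simp) F]
  have hswap : ∑ p ∈ Finset.univ.filter (fun p : Fin K × Fin K => p.2 < p.1), F p
      = ∑ p ∈ Finset.univ.filter (fun p : Fin K × Fin K => p.1 < p.2), F p := by
    apply Finset.sum_nbij' (fun p => Prod.swap p) (fun p => Prod.swap p) <;>
      simp +contextual [hF, Prod.swap] <;> intros <;> ring
  have htot : ∑ p : Fin K × Fin K, F p
      = 2 * ∑ p ∈ Finset.univ.filter (fun p : Fin K × Fin K => p.1 < p.2), F p := by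
    rw [← Finset.sum_filter_add_sum_filter_not Finset.univ (fun p : Fin K × Fin K => p.1 < p.2) F]
    rw [← Finset.sum_filter_add_sum_filter_not
      (Finset.univ.filter (fun p : Fin K × Fin K => ¬ p.1 < p.2))
      (fun p : Fin K × Fin K => p.2 < p.1) F]
    rw [Finset.filter_filter, Finset.filter_filter]
    have e1 : Finset.univ.filter (fun p : Fin K × Fin K => ¬ p.1 < p.2 ∧ p.2 < p.1)
        = Finset.univ.filter (fun p : Fin K × Fin K => p.2 < p.1) := by
      apply Finset.filter_congr; intro p _
      simp only [and_iff_right_iff_imp]; exact fun h => le_of_lt h |>.not_gt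
    have hzero : ∑ p ∈ Finset.univ.filter
        (fun p : Fin K × Fin K => ¬ p.1 < p.2 ∧ ¬ p.2 < p.1), F p = 0 := by
      apply Finset.sum_eq_zero
      intro p hp
      simp only [Finset.mem_filter] at hp
      have : p.1 = p.2 := le_antisymm (not_lt.1 hp.2.2) (not_lt.1 hp.2.1)
      simp [hF, this]
    rw [e1, hzero, hswap]
    ring
  have hval : ∑ p : Fin K × Fin K, F p = 2 * ((if j = j' then (K:ℝ) else 0) - 1) := by
    simp only [hF, Fintype.sum_prod_type]
    simp only [sub_mul, mul_sub, Finset.sum_sub_distrib]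
    simp [Finset.sum_ite_eq, mul_ite, ite_mul, mul_one, mul_zero, one_mul, zero_mul,
      Finset.sum_const, Finset.card_univ, eq_comm]
    split <;> simp [Finset.card_univ] <;> ring
  have hfin : ∑ p ∈ Finset.univ.filter (fun p : Fin K × Fin K => p.1 < p.2), F p
      = (if j = j' then (K:ℝ) else 0) - 1 := by
    have := htot.symm.trans hval
    linarith
  rw [lhs_eq, h1, hfin]
  simp only [Matrix.smul_apply, Matrix.sub_apply, Matrix.one_apply, onesMat, Matrix.of_apply,
    smul_eq_mul]
  rw [mul_sub]
  congr 1
  · split <;> simp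
  · field_simp

theorem stmt5 (K P : ℕ) (hK : 2 ≤ K) (hP : 1 ≤ P)
    (M R : Matrix (Fin P) (Fin P) ℝ) (hM : M.PosDef) (hR : R.PosDef)
    (U : Matrix (Fin K × Fin P) (Fin K × Fin P) ℝ) (hU : U.PosDef)
    (ℓ : Fin P → ℝ) (hℓ : ∀ i, 0 ≤ ℓ i)
    (L : Matrix (Fin P) (Fin P) ℝ) (hL : L = Matrix.diagonal ℓ)
    (T : Matrix (Fin K) (Fin K) ℝ)
    (hT : T = 1 - (K : ℝ)⁻¹ • onesMat (Fin K))
    (B : Matrix (Fin K × Fin P) (Fin K × Fin P) ℝ)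
    (hB : B = ((1 : Matrix (Fin K) (Fin K) ℝ) ⊗ₖ R
        + (T ⊗ₖ (1 : Matrix (Fin P) (Fin P) ℝ)) * U
            * (T ⊗ₖ (1 : Matrix (Fin P) (Fin P) ℝ)))⁻¹)
    (C1 : Matrix (Fin K × Fin P) (Fin K × Fin P) ℝ)
    (hC1 : C1 = U - U * (T ⊗ₖ (1 : Matrix (Fin P) (Fin P) ℝ)) * B
        * (T ⊗ₖ (1 : Matrix (Fin P) (Fin P) ℝ)) * U)
    (Ht : Matrix (Fin K × Fin P) (Fin K × Fin P) ℝ)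
    (hHt : Ht = B * (T ⊗ₖ (1 : Matrix (Fin P) (Fin P) ℝ)) * U
        * (T ⊗ₖ L) * U
        * (T ⊗ₖ (1 : Matrix (Fin P) (Fin P) ℝ)) * B) :
    trace ((Cmat K ⊗ₖ (1 : Matrix (Fin P) (Fin P) ℝ))
        * (T ⊗ₖ (M⁻¹ + R)⁻¹ + U⁻¹)⁻¹
        * ((Cmat K)ᵀ ⊗ₖ (1 : Matrix (Fin P) (Fin P) ℝ))
        * ((1 : Matrix {p : Fin K × Fin K // p.1 < p.2}
              {p : Fin K × Fin K // p.1 < p.2} ℝ) ⊗ₖ L))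
      = (K : ℝ) * (trace (C1 * (T ⊗ₖ L))
          + trace (((1 : Matrix (Fin K) (Fin K) ℝ) ⊗ₖ M + B)⁻¹ * Ht)) := by
  have hK0 : (K : ℝ) ≠ 0 := by positivity
  set Q : Matrix (Fin K × Fin P) (Fin K × Fin P) ℝ := T ⊗ₖ (1 : Matrix (Fin P) (Fin P) ℝ)
    with hQ
  set S : Matrix (Fin P) (Fin P) ℝ := (M⁻¹ + R)⁻¹ with hS
  -- basic facts about T and Q
  have hJJ : onesMat (Fin K) * onesMat (Fin K) = (K:ℝ) • onesMat (Fin K) := by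
    ext i j; simp [onesMat, Matrix.mul_apply, Matrix.smul_apply]
  have hT2 : T * T = T := by
    rw [hT]
    ext i j
    simp only [Matrix.mul_apply, Matrix.sub_apply, Matrix.smul_apply, Matrix.one_apply,
      onesMat, Matrix.of_apply, smul_eq_mul, sub_mul, mul_sub, Finset.sum_sub_distrib,
      mul_one, Finset.sum_ite_eq, Finset.mem_univ, if_true, Finset.sum_const,
      Finset.card_univ, Fintype.card_fin, nsmul_eq_mul]
    simp only [Finset.sum_ite_eq, Finset.sum_ite_eq', mul_ite, ite_mul, mul_zero, zero_mul,
      mul_one, one_mul, Finset.sum_const, Finset.card_univ, Fintype.card_fin, nsmul_eq_mul,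
      Finset.mem_univ, if_true]
    field_simp
    ring
  have hTt : Tᵀ = T := by
    have h1 : (onesMat (Fin K))ᵀ = onesMat (Fin K) := by ext i j; simp [onesMat]
    rw [hT, transpose_sub, transpose_smul, transpose_one, h1]
  have hQQ : Q * Q = Q := by
    rw [hQ, ← mul_kronecker_mul, hT2, one_mul]
  have hQt : Qᵀ = Q := by
    rw [hQ, ← kroneckerMap_transpose, hTt, transpose_one]
  have hQH : Qᴴ = Q := by
    rw [show Qᴴ = Qᵀ from by ext i j; simp [conjTranspose_apply, transpose_apply], hQt]
  -- positive definiteness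
  have hMR : (M⁻¹ + R).PosDef := hM.inv.add hR
  have hSpd : S.PosDef := hMR.inv
  have hQUQ : (Q * U * Q).PosSemidef := by
    have := hU.posSemidef.mul_mul_conjTranspose_same Q
    rwa [hQH] at this
  have hB0 : ((1 : Matrix (Fin K) (Fin K) ℝ) ⊗ₖ R + Q * U * Q).PosDef :=
    (kronOnePosDef hR).add_posSemidef hQUQ
  have hBpd : B.PosDef := by rw [hB]; exact hB0.inv
  have hBinv : B⁻¹ = (1 : Matrix (Fin K) (Fin K) ℝ) ⊗ₖ R + Q * U * Q := by
    rw [hB, Matrix.nonsing_inv_nonsing_inv _ hB0.det_pos.ne'.isUnit]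
  set G : Matrix (Fin K × Fin P) (Fin K × Fin P) ℝ :=
    (1 : Matrix (Fin K) (Fin K) ℝ) ⊗ₖ (M⁻¹ + R) + Q * U * Q with hG
  have hGpd : G.PosDef := (kronOnePosDef hMR).add_posSemidef hQUQ
  set D : Matrix (Fin K × Fin P) (Fin K × Fin P) ℝ :=
    (1 : Matrix (Fin K) (Fin K) ℝ) ⊗ₖ M + B with hD
  have hDpd : D.PosDef := (kronOnePosDef hM).add hBpd
  -- the inverse of the MSE-type matrix (Woodbury)
  have hTS : T ⊗ₖ S = Q * ((1 : Matrix (Fin K) (Fin K) ℝ) ⊗ₖ S) * Q := by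
    rw [hQ, ← mul_kronecker_mul, ← mul_kronecker_mul]
    simp only [mul_one, one_mul]
    rw [hT2]
  have hVpd : (T ⊗ₖ S + U⁻¹).PosDef := by
    have hpsd : (T ⊗ₖ S).PosSemidef := by
      have := (kronOnePosDef hSpd).posSemidef.mul_mul_conjTranspose_same Q
      rw [hQH] at this
      rwa [hTS]
    exact Matrix.PosDef.posSemidef_add hpsd hU.inv
  have e1 : ((1 : Matrix (Fin K) (Fin K) ℝ) ⊗ₖ S)
      * ((1 : Matrix (Fin K) (Fin K) ℝ) ⊗ₖ (M⁻¹ + R)) = 1 := by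
    rw [← mul_kronecker_mul, one_mul, hS, Matrix.nonsing_inv_mul _ hMR.det_pos.ne'.isUnit,
      one_kronecker_one]
  have e2 : ((1 : Matrix (Fin K) (Fin K) ℝ) ⊗ₖ S) * G
      = 1 + ((1 : Matrix (Fin K) (Fin K) ℝ) ⊗ₖ S) * (Q * U * Q) := by
    rw [hG, mul_add, e1]
  have e3 : G * G⁻¹ = 1 := Matrix.mul_nonsing_inv _ hGpd.det_pos.ne'.isUnit
  have hA : ((1 : Matrix (Fin K) (Fin K) ℝ) ⊗ₖ S) * (Q * U)
      = G⁻¹ * (Q * U)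
        + ((1 : Matrix (Fin K) (Fin K) ℝ) ⊗ₖ S) * (Q * U * Q) * (G⁻¹ * (Q * U)) := by
    have h5 : ((1 : Matrix (Fin K) (Fin K) ℝ) ⊗ₖ S)
        = (1 + ((1 : Matrix (Fin K) (Fin K) ℝ) ⊗ₖ S) * (Q * U * Q)) * G⁻¹ := by
      rw [← e2, mul_assoc, e3, mul_one]
    calc ((1 : Matrix (Fin K) (Fin K) ℝ) ⊗ₖ S) * (Q * U)
        = ((1 + ((1 : Matrix (Fin K) (Fin K) ℝ) ⊗ₖ S) * (Q * U * Q)) * G⁻¹) * (Q * U) := by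
          rw [← h5]
      _ = _ := by noncomm_ring
  have hW : (T ⊗ₖ S + U⁻¹)⁻¹ = U - U * Q * G⁻¹ * (Q * U) := by
    apply Matrix.inv_eq_right_inv
    rw [hTS]
    exact auxRing1 Q _ _ U U⁻¹ hA (Matrix.nonsing_inv_mul _ hU.det_pos.ne'.isUnit)
  -- the second inversion identity
  have hGb : G * B = ((1 : Matrix (Fin K) (Fin K) ℝ) ⊗ₖ M⁻¹) * B + 1 := by
    have hsplit : G = (1 : Matrix (Fin K) (Fin K) ℝ) ⊗ₖ M⁻¹ + B⁻¹ := by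
      rw [hG, hBinv, ← add_assoc, ← kronecker_add]
    rw [hsplit, add_mul, Matrix.nonsing_inv_mul _ hBpd.det_pos.ne'.isUnit]
  have hmD : ((1 : Matrix (Fin K) (Fin K) ℝ) ⊗ₖ M⁻¹) * D
      = 1 + ((1 : Matrix (Fin K) (Fin K) ℝ) ⊗ₖ M⁻¹) * B := by
    rw [hD, mul_add, ← mul_kronecker_mul, one_mul,
      Matrix.nonsing_inv_mul _ hM.det_pos.ne'.isUnit, one_kronecker_one]
  have hDD : D * D⁻¹ = 1 := Matrix.mul_nonsing_inv _ hDpd.det_pos.ne'.isUnit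
  have hm : ((1 : Matrix (Fin K) (Fin K) ℝ) ⊗ₖ M⁻¹) * B
      = D⁻¹ * B + ((1 : Matrix (Fin K) (Fin K) ℝ) ⊗ₖ M⁻¹) * (B * D⁻¹) * B := by
    have h5 : ((1 : Matrix (Fin K) (Fin K) ℝ) ⊗ₖ M⁻¹)
        = (1 + ((1 : Matrix (Fin K) (Fin K) ℝ) ⊗ₖ M⁻¹) * B) * D⁻¹ := by
      rw [← hmD, mul_assoc, hDD, mul_one]
    calc ((1 : Matrix (Fin K) (Fin K) ℝ) ⊗ₖ M⁻¹) * B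
        = ((1 + ((1 : Matrix (Fin K) (Fin K) ℝ) ⊗ₖ M⁻¹) * B) * D⁻¹) * B := by rw [← h5]
      _ = _ := by noncomm_ring
  have hGinv : G⁻¹ = B - B * (D⁻¹ * B) :=
    Matrix.inv_eq_right_inv (auxRing2 G _ B D⁻¹ hGb hm)
  -- trace computation
  have hCtC := cmat_mul K hK
  rw [← hT] at hCtC
  set W := (T ⊗ₖ S + U⁻¹)⁻¹ with hWdef
  set TL : Matrix (Fin K × Fin P) (Fin K × Fin P) ℝ := T ⊗ₖ L with hTL
  have step1 : trace ((Cmat K ⊗ₖ (1 : Matrix (Fin P) (Fin P) ℝ)) * W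
        * ((Cmat K)ᵀ ⊗ₖ (1 : Matrix (Fin P) (Fin P) ℝ))
        * ((1 : Matrix {p : Fin K × Fin K // p.1 < p.2}
              {p : Fin K × Fin K // p.1 < p.2} ℝ) ⊗ₖ L))
      = (K : ℝ) * trace (W * TL) := by
    have hBE : ((Cmat K)ᵀ ⊗ₖ (1 : Matrix (Fin P) (Fin P) ℝ))
          * ((1 : Matrix {p : Fin K × Fin K // p.1 < p.2}
              {p : Fin K × Fin K // p.1 < p.2} ℝ) ⊗ₖ L)
          * (Cmat K ⊗ₖ (1 : Matrix (Fin P) (Fin P) ℝ))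
        = (K : ℝ) • TL := by
      rw [← mul_kronecker_mul, ← mul_kronecker_mul]
      simp only [Matrix.mul_one, Matrix.one_mul]
      rw [hCtC, smul_kronecker, hTL]
    calc trace ((Cmat K ⊗ₖ (1 : Matrix (Fin P) (Fin P) ℝ)) * W
          * ((Cmat K)ᵀ ⊗ₖ (1 : Matrix (Fin P) (Fin P) ℝ))
          * ((1 : Matrix {p : Fin K × Fin K // p.1 < p.2}
              {p : Fin K × Fin K // p.1 < p.2} ℝ) ⊗ₖ L))
        = trace ((Cmat K ⊗ₖ (1 : Matrix (Fin P) (Fin P) ℝ)) * (W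
          * (((Cmat K)ᵀ ⊗ₖ (1 : Matrix (Fin P) (Fin P) ℝ))
          * ((1 : Matrix {p : Fin K × Fin K // p.1 < p.2}
              {p : Fin K × Fin K // p.1 < p.2} ℝ) ⊗ₖ L)))) := by
          rw [Matrix.mul_assoc, Matrix.mul_assoc]
      _ = trace ((W * (((Cmat K)ᵀ ⊗ₖ (1 : Matrix (Fin P) (Fin P) ℝ))
          * ((1 : Matrix {p : Fin K × Fin K // p.1 < p.2}
              {p : Fin K × Fin K // p.1 < p.2} ℝ) ⊗ₖ L)))
          * (Cmat K ⊗ₖ (1 : Matrix (Fin P) (Fin P) ℝ))) := Matrix.trace_mul_comm _ _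
      _ = trace (W * (((Cmat K)ᵀ ⊗ₖ (1 : Matrix (Fin P) (Fin P) ℝ))
          * ((1 : Matrix {p : Fin K × Fin K // p.1 < p.2}
              {p : Fin K × Fin K // p.1 < p.2} ℝ) ⊗ₖ L)
          * (Cmat K ⊗ₖ (1 : Matrix (Fin P) (Fin P) ℝ)))) := by
          rw [Matrix.mul_assoc, Matrix.mul_assoc]
      _ = trace (W * ((K : ℝ) • TL)) := by rw [hBE]
      _ = (K : ℝ) * trace (W * TL) := by
          rw [mul_smul_comm, Matrix.trace_smul, smul_eq_mul]
  rw [step1]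
  congr 1
  -- trace (W * TL) = trace (C1 * TL) + trace (D⁻¹ * Ht)
  have hsplit : W = C1 + (U * Q * B) * (D⁻¹ * (B * (Q * U))) := by
    rw [hW, hGinv, hC1]
    noncomm_ring
  rw [hsplit, add_mul, Matrix.trace_add]
  congr 1
  calc trace (((U * Q * B) * (D⁻¹ * (B * (Q * U)))) * TL)
      = trace ((U * Q * B) * ((D⁻¹ * (B * (Q * U))) * TL)) := by rw [mul_assoc]
    _ = trace (((D⁻¹ * (B * (Q * U))) * TL) * (U * Q * B)) := Matrix.trace_mul_comm _ _
    _ = trace (D⁻¹ * Ht) := by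
        congr 1
        rw [hHt]
        noncomm_ring
end
end

section
/- Let P ≥ 1, let M, R̃, Ṽ be symmetric positive definite P×P real matrices, let a_1 > 0, and set S = R̃ + a_1 Ṽ. Then {(M⁻¹ + R̃)⁻¹ + (1/a_1)·Ṽ⁻¹}⁻¹ = a_1·(Ṽ − a_1 Ṽ S⁻¹ Ṽ) + a_1²·Ṽ S⁻¹ (M + S⁻¹)⁻¹ S⁻¹ Ṽ. -/
noncomputable section
open Matrix

lemma posdef_smul {P : ℕ} {V : Matrix (Fin P) (Fin P) ℝ} (hV : V.PosDef)
    {c : ℝ} (hc : 0 < c) : (c • V).PosDef := by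
  refine ⟨?_, fun x hx => ?_⟩
  · have hVt : Vᵀ = V := (by simpa using hV.1 : V.IsSymm)
    simp [Matrix.IsHermitian, Matrix.conjTranspose_smul, hVt]
  · convert mul_pos hc (hV.2 hx) using 1
    simp [Finsupp.mul_sum, Matrix.smul_apply, mul_assoc, mul_left_comm]

lemma key {P : ℕ} (A B : Matrix (Fin P) (Fin P) ℝ)
    (hA : IsUnit A.det) (hB : IsUnit B.det) (hAB : IsUnit (A + B).det) :
    (A⁻¹ + B⁻¹)⁻¹ = B - B * (A + B)⁻¹ * B := by
  have h1 : A⁻¹ + B⁻¹ = A⁻¹ * (A + B) * B⁻¹ := by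
    rw [Matrix.mul_add, Matrix.add_mul, Matrix.nonsing_inv_mul _ hA,
      Matrix.mul_assoc, Matrix.mul_nonsing_inv _ hB, Matrix.mul_one, Matrix.one_mul,
      add_comm]
  rw [h1, Matrix.mul_inv_rev, Matrix.mul_inv_rev, Matrix.nonsing_inv_nonsing_inv _ hA,
    Matrix.nonsing_inv_nonsing_inv _ hB]
  have h2 : B * ((A + B)⁻¹ * A) = B * ((A + B)⁻¹ * (A + B)) - B * ((A + B)⁻¹ * B) := by
    rw [← Matrix.mul_sub, ← Matrix.mul_sub, add_sub_cancel_right]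
  rw [Matrix.mul_assoc B, h2, Matrix.nonsing_inv_mul _ hAB, Matrix.mul_one]

theorem stmt7 (P : ℕ) (hP : 1 ≤ P)
    (M R V : Matrix (Fin P) (Fin P) ℝ)
    (hM : M.PosDef) (hR : R.PosDef) (hV : V.PosDef)
    (a1 : ℝ) (ha1 : 0 < a1)
    (S : Matrix (Fin P) (Fin P) ℝ) (hS : S = R + a1 • V) :
    ((M⁻¹ + R)⁻¹ + a1⁻¹ • V⁻¹)⁻¹
      = a1 • (V - a1 • (V * S⁻¹ * V))
        + (a1 ^ 2) • (V * S⁻¹ * (M + S⁻¹)⁻¹ * S⁻¹ * V) := by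
  have haV : (a1 • V).PosDef := posdef_smul hV ha1
  have hSpd : S.PosDef := hS ▸ hR.add haV
  have hMR : (M⁻¹ + R).PosDef := hM.inv.add hR
  have hMS : (M⁻¹ + S).PosDef := hM.inv.add hSpd
  have hMSi : (M + S⁻¹).PosDef := hM.add hSpd.inv
  have dM : IsUnit M.det := hM.det_pos.ne'.isUnit
  have dMR : IsUnit (M⁻¹ + R).det := hMR.det_pos.ne'.isUnit
  have daV : IsUnit (a1 • V).det := haV.det_pos.ne'.isUnit
  have dV : IsUnit V.det := hV.det_pos.ne'.isUnit
  have dS : IsUnit S.det := hSpd.det_pos.ne'.isUnit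
  have dSi : IsUnit S⁻¹.det := hSpd.inv.det_pos.ne'.isUnit
  have dMSi : IsUnit (M + S⁻¹).det := hMSi.det_pos.ne'.isUnit
  have hsum : M⁻¹ + R + a1 • V = M⁻¹ + S := by rw [hS]; abel
  have dMS : IsUnit (M⁻¹ + R + a1 • V).det := by
    rw [hsum]; exact hMS.det_pos.ne'.isUnit
  have hsm : a1⁻¹ • V⁻¹ = (a1 • V)⁻¹ := by
    have : Invertible a1 := invertibleOfNonzero ha1.ne'
    rw [Matrix.inv_smul (A := V) a1 dV, invOf_eq_inv]
  have e1 : ((M⁻¹ + R)⁻¹ + a1⁻¹ • V⁻¹)⁻¹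
      = a1 • V - (a1 • V) * (M⁻¹ + S)⁻¹ * (a1 • V) := by
    rw [hsm, key (M⁻¹ + R) (a1 • V) dMR daV dMS, hsum]
  have e2 : (M⁻¹ + S)⁻¹ = S⁻¹ - S⁻¹ * (M + S⁻¹)⁻¹ * S⁻¹ := by
    have := key M S⁻¹ dM dSi dMSi
    rwa [Matrix.nonsing_inv_nonsing_inv _ dS] at this
  rw [e1, e2]
  simp only [Matrix.mul_sub, Matrix.sub_mul, Matrix.smul_mul, Matrix.mul_smul,
    smul_smul, smul_sub, sub_smul, pow_two, Matrix.mul_assoc]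
  abel
end
end

section
/- Let K ≥ 2 and P ≥ 1 be integers, let M, R̃, Ṽ be symmetric positive definite P×P real matrices, let a_1 > 0 and a ≥ 0, and let L = diag(ℓ_1, …, ℓ_P) with ℓ_i ≥ 0. Set N = a_1·I_K + a·1_K 1_Kᵀ, Ũ = N ⊗ Ṽ, S = R̃ + a_1 Ṽ, T = I_K − (1/K)·1_K 1_Kᵀ, and Σ = {T ⊗ (M⁻¹ + R̃)⁻¹ + Ũ⁻¹}⁻¹. Then tr[Σ (I_K ⊗ L)] = a_1²(K−1)·tr{(M + S⁻¹)⁻¹ S⁻¹ Ṽ L Ṽ S⁻¹} + a_1(K−1)·tr[(Ṽ − a_1 Ṽ S⁻¹ Ṽ) L] + (aK + a_1)·tr(Ṽ L). -/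
noncomputable section
open Matrix Kronecker

lemma posDef_smul' {n : Type*} [Fintype n] {A : Matrix n n ℝ} (hA : A.PosDef) {c : ℝ}
    (hc : 0 < c) : (c • A).PosDef := by
  refine ⟨?_, fun x hx => ?_⟩
  · simp [Matrix.IsHermitian, conjTranspose_smul, hA.1.eq, show Aᵀ = A from hA.1.eq]
  · exact (hA.smul hc).2 hx

lemma ones_mul_ones (K : ℕ) :
    onesMat (Fin K) * onesMat (Fin K) = (K : ℝ) • onesMat (Fin K) := by
  ext i j
  simp [onesMat, Matrix.mul_apply]

lemma trace_ones (K : ℕ) : trace (onesMat (Fin K)) = (K : ℝ) := by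
  simp [onesMat, Matrix.trace, Matrix.diag]

lemma woodbury' {P : ℕ} (M S : Matrix (Fin P) (Fin P) ℝ) (hM : M.PosDef) (hS : S.PosDef) :
    (M⁻¹ + S)⁻¹ = S⁻¹ - S⁻¹ * (M + S⁻¹)⁻¹ * S⁻¹ := by
  have hMu : IsUnit M.det := hM.det_pos.ne'.isUnit
  have hSu : IsUnit S.det := hS.det_pos.ne'.isUnit
  have hG : (M + S⁻¹).PosDef := hM.add hS.inv
  have hGu : IsUnit (M + S⁻¹).det := hG.det_pos.ne'.isUnit
  apply inv_eq_right_inv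
  have h1 : (M⁻¹ + S) * S⁻¹ = M⁻¹ * (M + S⁻¹) := by
    rw [add_mul, mul_add, mul_nonsing_inv S hSu, nonsing_inv_mul M hMu, add_comm]
  have h2 : (M⁻¹ + S) * (S⁻¹ * (M + S⁻¹)⁻¹ * S⁻¹) = M⁻¹ * S⁻¹ := by
    calc (M⁻¹ + S) * (S⁻¹ * (M + S⁻¹)⁻¹ * S⁻¹)
        = ((M⁻¹ + S) * S⁻¹) * (M + S⁻¹)⁻¹ * S⁻¹ := by
          simp only [mul_assoc]
      _ = M⁻¹ * ((M + S⁻¹) * (M + S⁻¹)⁻¹) * S⁻¹ := by rw [h1, mul_assoc M⁻¹]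
      _ = M⁻¹ * S⁻¹ := by rw [mul_nonsing_inv _ hGu, mul_one]
  rw [mul_sub, h1, h2, mul_add, nonsing_inv_mul M hMu, add_sub_cancel_right]

lemma key_inv {P : ℕ} (M R V : Matrix (Fin P) (Fin P) ℝ)
    (hM : M.PosDef) (hR : R.PosDef) (hV : V.PosDef)
    (a1 : ℝ) (ha1 : 0 < a1) :
    ((M⁻¹ + R)⁻¹ + a1⁻¹ • V⁻¹)⁻¹
      = a1 • V - a1 ^ 2 • (V * (M⁻¹ + (R + a1 • V))⁻¹ * V) := by
  set A := (M⁻¹ + R)⁻¹ with hAdef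
  set C := M⁻¹ + (R + a1 • V) with hCdef
  have hMRpd : (M⁻¹ + R).PosDef := hM.inv.add hR
  have hAu : IsUnit (M⁻¹ + R).det := hMRpd.det_pos.ne'.isUnit
  have hCpd : C.PosDef := hM.inv.add (hR.add (posDef_smul' hV ha1))
  have hCu : IsUnit C.det := hCpd.det_pos.ne'.isUnit
  have hVu : IsUnit V.det := hV.det_pos.ne'.isUnit
  have hVinv : V⁻¹ * V = 1 := nonsing_inv_mul V hVu
  have key : (M⁻¹ + R) * C⁻¹ + a1 • (V * C⁻¹) = 1 := by
    rw [← smul_mul_assoc, ← add_mul, add_assoc, ← hCdef]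
    exact mul_nonsing_inv _ hCu
  have h3 : (M⁻¹ + R) * C⁻¹ = 1 - a1 • (V * C⁻¹) := eq_sub_of_add_eq key
  have h4 : A * ((M⁻¹ + R) * C⁻¹) = C⁻¹ := by
    rw [← mul_assoc, hAdef, nonsing_inv_mul _ hAu, one_mul]
  have hC1 : C⁻¹ * V = A * V - a1 • (A * (V * (C⁻¹ * V))) := by
    calc C⁻¹ * V = (A * ((M⁻¹ + R) * C⁻¹)) * V := by rw [h4]
      _ = (A * (1 - a1 • (V * C⁻¹))) * V := by rw [h3]
      _ = A * V - a1 • (A * (V * (C⁻¹ * V))) := by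
          simp only [mul_sub, sub_mul, mul_one, smul_mul_assoc, mul_smul_comm, mul_assoc]
  apply inv_eq_right_inv
  have ha1' : a1⁻¹ * a1 ^ 2 = a1 := by field_simp
  simp only [mul_sub, add_mul, smul_mul_assoc, mul_smul_comm, smul_smul, mul_assoc]
  rw [hVinv, ← mul_assoc V⁻¹ V, hVinv, one_mul]
  rw [smul_add, smul_add, smul_smul, smul_smul, mul_inv_cancel₀ ha1.ne', one_smul,
    show a1 ^ 2 * a1⁻¹ = a1 by field_simp]
  nth_rewrite 2 [hC1]
  module

theorem stmt8 (K P : ℕ) (hK : 2 ≤ K) (hP : 1 ≤ P)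
    (M R V : Matrix (Fin P) (Fin P) ℝ)
    (hM : M.PosDef) (hR : R.PosDef) (hV : V.PosDef)
    (a1 a : ℝ) (ha1 : 0 < a1) (ha : 0 ≤ a)
    (ℓ : Fin P → ℝ) (hℓ : ∀ i, 0 ≤ ℓ i)
    (L : Matrix (Fin P) (Fin P) ℝ) (hL : L = Matrix.diagonal ℓ)
    (N : Matrix (Fin K) (Fin K) ℝ)
    (hN : N = a1 • (1 : Matrix (Fin K) (Fin K) ℝ) + a • onesMat (Fin K))
    (U : Matrix (Fin K × Fin P) (Fin K × Fin P) ℝ) (hU : U = N ⊗ₖ V)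
    (S : Matrix (Fin P) (Fin P) ℝ) (hS : S = R + a1 • V)
    (T : Matrix (Fin K) (Fin K) ℝ)
    (hT : T = 1 - (K : ℝ)⁻¹ • onesMat (Fin K))
    (Sig : Matrix (Fin K × Fin P) (Fin K × Fin P) ℝ)
    (hSig : Sig = (T ⊗ₖ (M⁻¹ + R)⁻¹ + U⁻¹)⁻¹) :
    trace (Sig * ((1 : Matrix (Fin K) (Fin K) ℝ) ⊗ₖ L))
      = a1 ^ 2 * ((K : ℝ) - 1)
          * trace ((M + S⁻¹)⁻¹ * (S⁻¹ * V * L * V * S⁻¹))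
        + a1 * ((K : ℝ) - 1) * trace ((V - a1 • (V * S⁻¹ * V)) * L)
        + (a * K + a1) * trace (V * L) := by
  -- scalar facts
  have hK0 : (K : ℝ) ≠ 0 := by
    have : (0 : ℝ) < K := by exact_mod_cast show 0 < K by omega
    exact this.ne'
  set c : ℝ := a1 + a * K with hcdef
  have hc : 0 < c := add_pos_of_pos_of_nonneg ha1 (mul_nonneg ha (Nat.cast_nonneg K))
  -- the averaging projector
  set J : Matrix (Fin K) (Fin K) ℝ := (K : ℝ)⁻¹ • onesMat (Fin K) with hJdef
  have hTJ : T = 1 - J := hT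
  have hJJ : J * J = J := by
    rw [hJdef, smul_mul_assoc, mul_smul_comm, ones_mul_ones K, smul_smul, smul_smul]
    congr 1
    field_simp
  have hTplusJ : T + J = 1 := by rw [hTJ]; abel
  have hTJ0 : T * J = 0 := by rw [hTJ, sub_mul, one_mul, hJJ, sub_self]
  have hJT0 : J * T = 0 := by rw [hTJ, mul_sub, mul_one, hJJ, sub_self]
  have hTT : T * T = T := by
    rw [hTJ, sub_mul, one_mul, mul_sub, mul_one, hJJ]; abel
  have htrJ : trace J = 1 := by
    rw [hJdef, Matrix.trace_smul, trace_ones, smul_eq_mul, inv_mul_cancel₀ hK0]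
  have htrT : trace T = (K : ℝ) - 1 := by
    rw [hTJ, Matrix.trace_sub, Matrix.trace_one, htrJ]; simp
  -- positive definiteness and invertibility
  have hSpd : S.PosDef := hS ▸ hR.add (posDef_smul' hV ha1)
  have hVu : IsUnit V.det := hV.det_pos.ne'.isUnit
  have hVinv : V⁻¹ * V = 1 := nonsing_inv_mul V hVu
  set A := (M⁻¹ + R)⁻¹ with hAdef
  set D := A + a1⁻¹ • V⁻¹ with hDdef
  have hDpd : D.PosDef := (hM.inv.add hR).inv.add (posDef_smul' hV.inv (inv_pos.2 ha1))
  have hDD : D * D⁻¹ = 1 := mul_nonsing_inv D hDpd.det_pos.ne'.isUnit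
  -- N⁻¹
  have hOnes : onesMat (Fin K) = (K : ℝ) • J := by
    rw [hJdef, smul_smul, mul_inv_cancel₀ hK0, one_smul]
  have hN' : N = a1 • T + c • J := by
    rw [hN, hOnes, ← hTplusJ]
    module
  have hNinv : N⁻¹ = a1⁻¹ • T + c⁻¹ • J := by
    apply inv_eq_right_inv
    rw [hN']
    simp only [add_mul, mul_add, smul_mul_assoc, mul_smul_comm, smul_smul, hTT, hTJ0, hJT0, hJJ,
      smul_zero, add_zero, zero_add, mul_inv_cancel₀ ha1.ne', mul_inv_cancel₀ hc.ne',
      inv_mul_cancel₀ ha1.ne', inv_mul_cancel₀ hc.ne', one_smul]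
    exact hTplusJ
  -- the big inverse
  have hInner : T ⊗ₖ (M⁻¹ + R)⁻¹ + U⁻¹ = T ⊗ₖ D + c⁻¹ • (J ⊗ₖ V⁻¹) := by
    rw [hU, Matrix.inv_kronecker, hNinv, add_kronecker, smul_kronecker, smul_kronecker,
      hDdef, kronecker_add, kronecker_smul]
    abel
  have hSig' : Sig = T ⊗ₖ D⁻¹ + c • (J ⊗ₖ V) := by
    rw [hSig, hInner]
    apply inv_eq_right_inv
    simp only [add_mul, mul_add, smul_mul_assoc, mul_smul_comm, smul_smul,
      ← mul_kronecker_mul, hTT, hTJ0, hJT0, hJJ, hDD, hVinv, zero_kronecker,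
      smul_zero, add_zero, zero_add, inv_mul_cancel₀ hc.ne', mul_inv_cancel₀ hc.ne', one_smul]
    rw [← add_kronecker, hTplusJ, one_kronecker_one]
  -- trace of Sig * (1 ⊗ L)
  have htrace : trace (Sig * ((1 : Matrix (Fin K) (Fin K) ℝ) ⊗ₖ L))
      = ((K : ℝ) - 1) * trace (D⁻¹ * L) + c * trace (V * L) := by
    rw [hSig', add_mul, smul_mul_assoc, ← mul_kronecker_mul, ← mul_kronecker_mul,
      mul_one T, mul_one J, trace_add, trace_smul, trace_kronecker, trace_kronecker,
      htrT, htrJ, smul_eq_mul]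
    ring
  -- the P-dimensional reduction
  have hDinv : D⁻¹ = a1 • V - a1 ^ 2 • (V * (M⁻¹ + S)⁻¹ * V) := by
    rw [hDdef, hAdef, key_inv M R V hM hR hV a1 ha1, hS]
  have hW : (M⁻¹ + S)⁻¹ = S⁻¹ - S⁻¹ * (M + S⁻¹)⁻¹ * S⁻¹ := woodbury' M S hM hSpd
  set G1 := (M + S⁻¹)⁻¹ with hG1def
  have hcyc : trace (V * (S⁻¹ * G1 * S⁻¹) * V * L)
      = trace (G1 * (S⁻¹ * V * L * V * S⁻¹)) := by
    calc trace (V * (S⁻¹ * G1 * S⁻¹) * V * L)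
        = trace ((V * S⁻¹) * (G1 * (S⁻¹ * V * L))) := by
          congr 1; simp only [mul_assoc]
      _ = trace ((G1 * (S⁻¹ * V * L)) * (V * S⁻¹)) := trace_mul_comm _ _
      _ = trace (G1 * (S⁻¹ * V * L * V * S⁻¹)) := by
          congr 1; simp only [mul_assoc]
  have htrD : trace (D⁻¹ * L)
      = a1 * trace (V * L) - a1 ^ 2 * trace (V * S⁻¹ * V * L)
        + a1 ^ 2 * trace (G1 * (S⁻¹ * V * L * V * S⁻¹)) := by
    rw [hDinv, hW]
    rw [sub_mul, smul_mul_assoc, smul_mul_assoc, trace_sub, trace_smul, trace_smul]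
    rw [show V * (S⁻¹ - S⁻¹ * G1 * S⁻¹) * V * L
        = V * S⁻¹ * V * L - V * (S⁻¹ * G1 * S⁻¹) * V * L by
      simp only [mul_sub, sub_mul]]
    rw [trace_sub, hcyc]
    simp only [smul_eq_mul]
    ring
  have htrVL : trace ((V - a1 • (V * S⁻¹ * V)) * L)
      = trace (V * L) - a1 * trace (V * S⁻¹ * V * L) := by
    rw [sub_mul, smul_mul_assoc, trace_sub, trace_smul, smul_eq_mul]
  rw [htrace, htrD, htrVL, hcdef]
  ring
end
end

section
/- Let K ≥ 2 and P ≥ 1 be integers, n = K(K−1)/2, let M, R̃, Ṽ be symmetric positive definite P×P real matrices, let a_1 > 0 and a ≥ 0, and let L = diag(ℓ_1, …, ℓ_P) with ℓ_i ≥ 0. Set N = a_1·I_K + a·1_K 1_Kᵀ, Ũ = N ⊗ Ṽ, S = R̃ + a_1 Ṽ, T = I_K − (1/K)·1_K 1_Kᵀ, Σ = {T ⊗ (M⁻¹ + R̃)⁻¹ + Ũ⁻¹}⁻¹, and let 𝒞 be the n×K pairwise-contrast matrix whose rows are e_kᵀ − e_{k'}ᵀ for 1 ≤ k < k' ≤ K.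 Then tr[(𝒞 ⊗ I_P) Σ (𝒞ᵀ ⊗ I_P) (I_n ⊗ L)] = K·[a_1²(K−1)·tr{(M + S⁻¹)⁻¹ S⁻¹ Ṽ L Ṽ S⁻¹} + a_1(K−1)·tr((Ṽ − a_1 Ṽ S⁻¹ Ṽ) L)]. -/
noncomputable section
open Matrix Kronecker

lemma pd_mul_inv {n : Type*} [Fintype n] [DecidableEq n] {A : Matrix n n ℝ} (hA : A.PosDef) :
    A * A⁻¹ = 1 :=
  Matrix.mul_nonsing_inv _ ((Matrix.isUnit_iff_isUnit_det _).mp hA.isUnit)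

lemma pd_inv_mul {n : Type*} [Fintype n] [DecidableEq n] {A : Matrix n n ℝ} (hA : A.PosDef) :
    A⁻¹ * A = 1 :=
  Matrix.nonsing_inv_mul _ ((Matrix.isUnit_iff_isUnit_det _).mp hA.isUnit)

lemma CtC (K : ℕ) :
    (Cmat K)ᵀ * Cmat K = (K : ℝ) • (1 : Matrix (Fin K) (Fin K) ℝ) - onesMat (Fin K) := by
  ext j j'
  rw [Matrix.mul_apply]
  set f : Fin K × Fin K → ℝ := fun p =>
    (((if j = p.1 then (1:ℝ) else 0) - (if j = p.2 then 1 else 0)) *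
      ((if j' = p.1 then (1:ℝ) else 0) - (if j' = p.2 then 1 else 0))) with hf
  have hsub : ∑ q : {p : Fin K × Fin K // p.1 < p.2}, (Cmat K)ᵀ j q * Cmat K q j'
      = ∑ p ∈ Finset.univ.filter (fun p : Fin K × Fin K => p.1 < p.2), f p := by
    have h0 : ∀ q : {p : Fin K × Fin K // p.1 < p.2}, (Cmat K)ᵀ j q * Cmat K q j' = f q.val :=
      fun q => by simp [Cmat, hf, Matrix.transpose_apply]
    rw [Finset.sum_congr rfl (fun q _ => h0 q), ← Finset.subtype_univ,
      Finset.sum_subtype_eq_sum_filter]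
  rw [hsub]
  have hswap : ∑ p ∈ Finset.univ.filter (fun p : Fin K × Fin K => p.2 < p.1), f p
      = ∑ p ∈ Finset.univ.filter (fun p : Fin K × Fin K => p.1 < p.2), f p := by
    refine Finset.sum_equiv (Equiv.prodComm (Fin K) (Fin K)) (fun p => by simp) (fun p _ => ?_)
    simp only [hf, Equiv.prodComm_apply, Prod.fst_swap, Prod.snd_swap]
    ring
  have htot : ∑ p : Fin K × Fin K, f p
      = 2 * ∑ p ∈ Finset.univ.filter (fun p : Fin K × Fin K => p.1 < p.2), f p := by
    rw [← Finset.sum_filter_add_sum_filter_not Finset.univ (fun p : Fin K × Fin K => p.1 < p.2) f]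
    have h2 : ∑ p ∈ Finset.univ.filter (fun p : Fin K × Fin K => ¬ p.1 < p.2), f p
        = ∑ p ∈ Finset.univ.filter (fun p : Fin K × Fin K => p.2 < p.1), f p := by
      rw [← Finset.sum_filter_add_sum_filter_not
        (Finset.univ.filter (fun p : Fin K × Fin K => ¬ p.1 < p.2))
        (fun p : Fin K × Fin K => p.2 < p.1) f]
      have h3 : ∑ p ∈ (Finset.univ.filter (fun p : Fin K × Fin K => ¬ p.1 < p.2)).filter
          (fun p : Fin K × Fin K => ¬ p.2 < p.1), f p = 0 := by
        refine Finset.sum_eq_zero (fun p hp => ?_)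
        simp only [Finset.mem_filter] at hp
        have : p.1 = p.2 := le_antisymm (not_lt.mp hp.2) (not_lt.mp hp.1.2)
        simp [hf, this]
      rw [h3, add_zero, Finset.filter_filter]
      congr 1
      ext p
      simp only [Finset.mem_filter]
      constructor
      · rintro ⟨hu, _, h⟩; exact ⟨hu, h⟩
      · rintro ⟨hu, h⟩; exact ⟨hu, asymm h, h⟩
    rw [h2, hswap]; ring
  have hval : ∑ p : Fin K × Fin K, f p = 2 * ((K : ℝ) * (if j = j' then 1 else 0) - 1) := by
    simp [hf, Fintype.sum_prod_type, sub_mul, mul_sub, Finset.sum_sub_distrib, Finset.sum_ite_eq,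
      Finset.mul_sum, Finset.sum_ite_eq', eq_comm]
    ring_nf
    split <;> simp
  have := htot.symm.trans hval
  have hlt : ∑ p ∈ Finset.univ.filter (fun p : Fin K × Fin K => p.1 < p.2), f p
      = (K : ℝ) * (if j = j' then 1 else 0) - 1 := by linarith
  rw [hlt]
  simp only [onesMat, Matrix.sub_apply, Matrix.smul_apply, Matrix.one_apply, Matrix.of_apply,
    smul_eq_mul]

theorem stmt9 (K P : ℕ) (hK : 2 ≤ K) (hP : 1 ≤ P)
    (M R V : Matrix (Fin P) (Fin P) ℝ)
    (hM : M.PosDef) (hR : R.PosDef) (hV : V.PosDef)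
    (a1 a : ℝ) (ha1 : 0 < a1) (ha : 0 ≤ a)
    (ℓ : Fin P → ℝ) (hℓ : ∀ i, 0 ≤ ℓ i)
    (L : Matrix (Fin P) (Fin P) ℝ) (hL : L = Matrix.diagonal ℓ)
    (N : Matrix (Fin K) (Fin K) ℝ)
    (hN : N = a1 • (1 : Matrix (Fin K) (Fin K) ℝ) + a • onesMat (Fin K))
    (U : Matrix (Fin K × Fin P) (Fin K × Fin P) ℝ) (hU : U = N ⊗ₖ V)
    (S : Matrix (Fin P) (Fin P) ℝ) (hS : S = R + a1 • V)
    (T : Matrix (Fin K) (Fin K) ℝ)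
    (hT : T = 1 - (K : ℝ)⁻¹ • onesMat (Fin K))
    (Sig : Matrix (Fin K × Fin P) (Fin K × Fin P) ℝ)
    (hSig : Sig = (T ⊗ₖ (M⁻¹ + R)⁻¹ + U⁻¹)⁻¹) :
    trace ((Cmat K ⊗ₖ (1 : Matrix (Fin P) (Fin P) ℝ)) * Sig
        * ((Cmat K)ᵀ ⊗ₖ (1 : Matrix (Fin P) (Fin P) ℝ))
        * ((1 : Matrix {p : Fin K × Fin K // p.1 < p.2}
              {p : Fin K × Fin K // p.1 < p.2} ℝ) ⊗ₖ L))
      = (K : ℝ) * (a1 ^ 2 * ((K : ℝ) - 1)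
            * trace ((M + S⁻¹)⁻¹ * (S⁻¹ * V * L * V * S⁻¹))
          + a1 * ((K : ℝ) - 1) * trace ((V - a1 • (V * S⁻¹ * V)) * L)) := by
  have hKne : (K : ℝ) ≠ 0 := by positivity
  set J : Matrix (Fin K) (Fin K) ℝ := onesMat (Fin K) with hJ
  -- basic K×K algebra
  have hJJ : J * J = (K : ℝ) • J := by
    ext i j
    simp [hJ, onesMat, Matrix.mul_apply, Matrix.smul_apply]
  have hTJ : T * J = 0 := by
    rw [hT, Matrix.sub_mul, Matrix.one_mul, Matrix.smul_mul, hJJ, smul_smul,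
      inv_mul_cancel₀ hKne, one_smul, sub_self]
  have hJT : J * T = 0 := by
    rw [hT, Matrix.mul_sub, Matrix.mul_one, Matrix.mul_smul, hJJ, smul_smul,
      inv_mul_cancel₀ hKne, one_smul, sub_self]
  have hTT : T * T = T := by
    rw [hT, Matrix.mul_sub, Matrix.mul_one, ← hT, Matrix.mul_smul, hTJ, smul_zero, sub_zero]
  have hT1 : T + (K : ℝ)⁻¹ • J = 1 := by rw [hT]; abel
  have htrJ : trace J = (K : ℝ) := by
    simp [hJ, onesMat, Matrix.trace]
  have htrT : trace T = (K : ℝ) - 1 := by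
    rw [hT, Matrix.trace_sub, Matrix.trace_smul, htrJ, Matrix.trace_one]
    simp [inv_mul_cancel₀ hKne]
  -- positive definiteness
  have hMi := hM.inv
  have hB : (M⁻¹ + R).PosDef := hMi.add hR
  have hA : ((M⁻¹ + R)⁻¹).PosDef := hB.inv
  have hVi := hV.inv
  have hSpd : S.PosDef := by rw [hS]; exact hR.add (posDef_smul' hV ha1)
  have hSi := hSpd.inv
  have hG : (M + S⁻¹).PosDef := hM.add hSi
  have hE : (M⁻¹ + S).PosDef := hMi.add hSpd
  have hF : ((M⁻¹ + R)⁻¹ + a1⁻¹ • V⁻¹).PosDef := hA.add (posDef_smul' hVi (by positivity))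
  set A : Matrix (Fin P) (Fin P) ℝ := (M⁻¹ + R)⁻¹ with hAdef
  set W : Matrix (Fin P) (Fin P) ℝ := (A + a1⁻¹ • V⁻¹)⁻¹ with hWdef
  set E : Matrix (Fin P) (Fin P) ℝ := M⁻¹ + S with hEdef
  set G : Matrix (Fin P) (Fin P) ℝ := M + S⁻¹ with hGdef
  set d : ℝ := a1 + (K : ℝ) * a with hd
  have hdpos : 0 < d := by positivity
  have hdne : d ≠ 0 := ne_of_gt hdpos
  have ha1ne : a1 ≠ 0 := ne_of_gt ha1
  -- the inverse of N
  have hNT : N = a1 • T + (d * (K : ℝ)⁻¹) • J := by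
    rw [hN, hT, smul_sub, smul_smul]
    have hco : d * (K : ℝ)⁻¹ = a1 * (K : ℝ)⁻¹ + a := by
      rw [hd]
      field_simp
    rw [hco, add_smul]
    abel
  have hNinv : N⁻¹ = a1⁻¹ • T + (d⁻¹ * (K : ℝ)⁻¹) • J := by
    apply Matrix.inv_eq_right_inv
    rw [hNT, Matrix.add_mul, Matrix.mul_add, Matrix.mul_add,
      Matrix.smul_mul, Matrix.smul_mul, Matrix.smul_mul, Matrix.smul_mul,
      Matrix.mul_smul, Matrix.mul_smul, Matrix.mul_smul, Matrix.mul_smul,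
      hTT, hTJ, hJT, hJJ]
    simp only [smul_zero, smul_smul]
    rw [mul_inv_cancel₀ ha1ne, one_smul]
    have hc : d * (K : ℝ)⁻¹ * (d⁻¹ * (K : ℝ)⁻¹ * (K : ℝ)) = (K : ℝ)⁻¹ := by
      field_simp
    rw [hc, add_zero, zero_add]
    exact hT1
  -- the explicit form of Sigma
  have hUinv : U⁻¹ = a1⁻¹ • (T ⊗ₖ V⁻¹) + (d⁻¹ * (K : ℝ)⁻¹) • (J ⊗ₖ V⁻¹) := by
    rw [hU, Matrix.inv_kronecker, hNinv, Matrix.add_kronecker, Matrix.smul_kronecker,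
      Matrix.smul_kronecker]
  have hWW : (A + a1⁻¹ • V⁻¹) * W = 1 := pd_mul_inv hF
  have hSigX : Sig = T ⊗ₖ W + (d * (K : ℝ)⁻¹) • (J ⊗ₖ V) := by
    rw [hSig]
    apply Matrix.inv_eq_right_inv
    rw [hUinv]
    have hTcomb : T ⊗ₖ A + (a1⁻¹ • (T ⊗ₖ V⁻¹) + (d⁻¹ * (K : ℝ)⁻¹) • (J ⊗ₖ V⁻¹))
        = T ⊗ₖ (A + a1⁻¹ • V⁻¹) + (d⁻¹ * (K : ℝ)⁻¹) • (J ⊗ₖ V⁻¹) := by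
      rw [Matrix.kronecker_add, Matrix.kronecker_smul, add_assoc]
    rw [hTcomb, Matrix.add_mul, Matrix.mul_add, Matrix.mul_add,
      Matrix.mul_smul, Matrix.mul_smul, Matrix.smul_mul, Matrix.smul_mul,
      ← Matrix.mul_kronecker_mul, ← Matrix.mul_kronecker_mul, ← Matrix.mul_kronecker_mul,
      ← Matrix.mul_kronecker_mul, hTT, hTJ, hJT, hJJ, hWW,
      pd_inv_mul hV]
    simp only [Matrix.zero_kronecker, smul_zero, add_zero, zero_add, smul_smul,
      Matrix.smul_kronecker]
    have hc : d * (K : ℝ)⁻¹ * (d⁻¹ * (K : ℝ)⁻¹ * (K : ℝ)) = (K : ℝ)⁻¹ := by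
      field_simp
    rw [hc, ← Matrix.smul_kronecker, ← Matrix.add_kronecker, hT1, Matrix.one_kronecker_one]
  -- reduce the LHS trace
  have hKT : (K : ℝ) • (1 : Matrix (Fin K) (Fin K) ℝ) - J = (K : ℝ) • T := by
    rw [hT, smul_sub, smul_smul, mul_inv_cancel₀ hKne, one_smul]
  have hprod : ((Cmat K)ᵀ ⊗ₖ (1 : Matrix (Fin P) (Fin P) ℝ))
        * ((1 : Matrix {p : Fin K × Fin K // p.1 < p.2}
              {p : Fin K × Fin K // p.1 < p.2} ℝ) ⊗ₖ L)
        * (Cmat K ⊗ₖ (1 : Matrix (Fin P) (Fin P) ℝ))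
      = (K : ℝ) • (T ⊗ₖ L) := by
    rw [← Matrix.mul_kronecker_mul, ← Matrix.mul_kronecker_mul, Matrix.mul_one,
      Matrix.mul_one, Matrix.one_mul, CtC, ← hJ, hKT, Matrix.smul_kronecker]
  have hLHS : trace ((Cmat K ⊗ₖ (1 : Matrix (Fin P) (Fin P) ℝ)) * Sig
        * ((Cmat K)ᵀ ⊗ₖ (1 : Matrix (Fin P) (Fin P) ℝ))
        * ((1 : Matrix {p : Fin K × Fin K // p.1 < p.2}
              {p : Fin K × Fin K // p.1 < p.2} ℝ) ⊗ₖ L))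
      = (K : ℝ) * (((K : ℝ) - 1) * trace (W * L)) := by
    have h1 : (Cmat K ⊗ₖ (1 : Matrix (Fin P) (Fin P) ℝ)) * Sig
        * ((Cmat K)ᵀ ⊗ₖ (1 : Matrix (Fin P) (Fin P) ℝ))
        * ((1 : Matrix {p : Fin K × Fin K // p.1 < p.2}
              {p : Fin K × Fin K // p.1 < p.2} ℝ) ⊗ₖ L)
        = (Cmat K ⊗ₖ (1 : Matrix (Fin P) (Fin P) ℝ))
          * (Sig * (((Cmat K)ᵀ ⊗ₖ (1 : Matrix (Fin P) (Fin P) ℝ))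
            * ((1 : Matrix {p : Fin K × Fin K // p.1 < p.2}
              {p : Fin K × Fin K // p.1 < p.2} ℝ) ⊗ₖ L))) := by
      simp [Matrix.mul_assoc]
    rw [h1, Matrix.trace_mul_comm, Matrix.mul_assoc, hprod]
    rw [hSigX, Matrix.mul_smul, Matrix.add_mul, Matrix.smul_mul,
      ← Matrix.mul_kronecker_mul, ← Matrix.mul_kronecker_mul, hTT, hJT,
      Matrix.zero_kronecker, smul_zero, add_zero, Matrix.trace_smul,
      Matrix.trace_kronecker, htrT]
    simp only [smul_eq_mul]
  rw [hLHS]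
  -- Woodbury-type identity for W
  have hBE : (M⁻¹ + R) + a1 • V = E := by rw [hEdef, hS]; abel
  have hAB : A * (M⁻¹ + R) = 1 := pd_inv_mul hB
  have hVV : V⁻¹ * V = 1 := pd_inv_mul hV
  have hEEi : E * E⁻¹ = 1 := pd_mul_inv hE
  have key : a1 ^ 2 • (A * (V * (E⁻¹ * V))) + a1 • (E⁻¹ * V) = a1 • (A * V) := by
    have h1 : a1 • (E⁻¹ * V) = A * (a1 • ((M⁻¹ + R) * (E⁻¹ * V))) := by
      rw [Matrix.mul_smul, ← Matrix.mul_assoc, hAB, Matrix.one_mul]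
    have h2 : a1 ^ 2 • (A * (V * (E⁻¹ * V))) = A * (a1 ^ 2 • (V * (E⁻¹ * V))) := by
      rw [Matrix.mul_smul]
    rw [h1, h2, ← Matrix.mul_add]
    have h3 : a1 ^ 2 • (V * (E⁻¹ * V)) + a1 • ((M⁻¹ + R) * (E⁻¹ * V))
        = a1 • (((M⁻¹ + R) + a1 • V) * (E⁻¹ * V)) := by
      simp only [Matrix.add_mul, Matrix.smul_mul, smul_add, smul_smul, ← sq]
      abel
    rw [h3, hBE]
    rw [show E * (E⁻¹ * V) = V from by rw [← Matrix.mul_assoc, hEEi, Matrix.one_mul],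
      Matrix.mul_smul]
  have hW : W = a1 • V - a1 ^ 2 • (V * (E⁻¹ * V)) := by
    rw [hWdef]
    apply Matrix.inv_eq_right_inv
    rw [Matrix.add_mul, Matrix.mul_sub, Matrix.mul_sub,
      Matrix.mul_smul, Matrix.mul_smul, Matrix.mul_smul, Matrix.mul_smul,
      Matrix.smul_mul, Matrix.smul_mul, smul_smul, smul_smul,
      mul_inv_cancel₀ ha1ne, one_smul, hVV]
    have h4 : a1 ^ 2 * a1⁻¹ = a1 := by
      rw [sq, mul_assoc, mul_inv_cancel₀ ha1ne, mul_one]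
    have h5 : V⁻¹ * (V * (E⁻¹ * V)) = E⁻¹ * V := by
      rw [← Matrix.mul_assoc, hVV, Matrix.one_mul]
    rw [h4, h5]
    have h6 : a1 ^ 2 • (A * (V * (E⁻¹ * V))) = a1 • (A * V) - a1 • (E⁻¹ * V) :=
      eq_sub_of_add_eq key
    rw [h6]
    abel
  -- expansion of E⁻¹
  have hSS : S * S⁻¹ = 1 := pd_mul_inv hSpd
  have hGGi : G * G⁻¹ = 1 := pd_mul_inv hG
  have hMM : M⁻¹ * M = 1 := pd_inv_mul hM
  have hEinv : E⁻¹ = S⁻¹ - S⁻¹ * (G⁻¹ * S⁻¹) := by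
    apply Matrix.inv_eq_right_inv
    rw [hEdef, Matrix.add_mul, Matrix.mul_sub, Matrix.mul_sub]
    have key2 : M⁻¹ * (S⁻¹ * (G⁻¹ * S⁻¹)) + G⁻¹ * S⁻¹ = M⁻¹ * S⁻¹ := by
      have h1 : M⁻¹ * (M * (G⁻¹ * S⁻¹)) = G⁻¹ * S⁻¹ := by
        rw [← Matrix.mul_assoc, hMM, Matrix.one_mul]
      have h3 : S⁻¹ + M = G := by rw [hGdef]; abel
      calc M⁻¹ * (S⁻¹ * (G⁻¹ * S⁻¹)) + G⁻¹ * S⁻¹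
          = M⁻¹ * (S⁻¹ * (G⁻¹ * S⁻¹)) + M⁻¹ * (M * (G⁻¹ * S⁻¹)) := by rw [h1]
        _ = M⁻¹ * ((S⁻¹ + M) * (G⁻¹ * S⁻¹)) := by rw [← Matrix.mul_add, Matrix.add_mul]
        _ = M⁻¹ * S⁻¹ := by
            rw [h3, show G * (G⁻¹ * S⁻¹) = S⁻¹ from by rw [← Matrix.mul_assoc, hGGi, Matrix.one_mul]]
    have h4 : S * (S⁻¹ * (G⁻¹ * S⁻¹)) = G⁻¹ * S⁻¹ := by
      rw [← Matrix.mul_assoc, hSS, Matrix.one_mul]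
    rw [h4]
    have h5 : M⁻¹ * (S⁻¹ * (G⁻¹ * S⁻¹)) = M⁻¹ * S⁻¹ - G⁻¹ * S⁻¹ := eq_sub_of_add_eq key2
    rw [h5, hSS]
    abel
  -- final trace computation
  have htr1 : trace ((V * ((S⁻¹ * (G⁻¹ * S⁻¹)) * V)) * L)
      = trace (G⁻¹ * (S⁻¹ * V * L * V * S⁻¹)) := by
    have e1 : (V * ((S⁻¹ * (G⁻¹ * S⁻¹)) * V)) * L
        = (V * S⁻¹) * (G⁻¹ * (S⁻¹ * (V * L))) := by
      simp [Matrix.mul_assoc]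
    have e2 : (G⁻¹ * (S⁻¹ * (V * L))) * (V * S⁻¹)
        = G⁻¹ * (S⁻¹ * V * L * V * S⁻¹) := by
      simp [Matrix.mul_assoc]
    rw [e1, Matrix.trace_mul_comm, e2]
  have htr2 : trace ((V - a1 • (V * S⁻¹ * V)) * L)
      = trace (V * L) - a1 * trace ((V * (S⁻¹ * V)) * L) := by
    rw [Matrix.sub_mul, Matrix.trace_sub, Matrix.smul_mul, Matrix.trace_smul]
    simp [Matrix.mul_assoc]
  have htrW : trace (W * L) = a1 * trace (V * L)
      - a1 ^ 2 * trace ((V * (S⁻¹ * V)) * L)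
      + a1 ^ 2 * trace (G⁻¹ * (S⁻¹ * V * L * V * S⁻¹)) := by
    rw [hW, hEinv]
    have e3 : V * ((S⁻¹ - S⁻¹ * (G⁻¹ * S⁻¹)) * V)
        = V * (S⁻¹ * V) - V * ((S⁻¹ * (G⁻¹ * S⁻¹)) * V) := by
      rw [Matrix.sub_mul, Matrix.mul_sub]
    rw [e3, Matrix.sub_mul, Matrix.smul_mul, Matrix.smul_mul, Matrix.sub_mul,
      Matrix.trace_sub, Matrix.trace_smul, Matrix.trace_smul,
      Matrix.trace_sub, htr1]
    simp only [smul_eq_mul]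
    ring
  rw [htrW, htr2]
  ring
end
end

section
/- Let K ≥ 2 and P ≥ 1 be integers, n = K(K−1)/2, let R̃, Ṽ be symmetric positive definite P×P real matrices, let a_1 > 0 and a ≥ 0, and let L = diag(ℓ_1, …, ℓ_P) with ℓ_i ≥ 0. Set N = a_1·I_K + a·1_K 1_Kᵀ, Ũ = N ⊗ Ṽ, S = R̃ + a_1 Ṽ, T = I_K − (1/K)·1_K 1_Kᵀ, and let 𝒞 be the n×K pairwise-contrast matrix whose rows are e_kᵀ − e_{k'}ᵀ for 1 ≤ k < k' ≤ K. For a symmetric positive definite P×P matrix M define Φ_α(M) = tr[{T ⊗ (M⁻¹ + R̃)⁻¹ + Ũ⁻¹}⁻¹ (I_K ⊗ L)], Φ_θ(M) = tr[(𝒞 ⊗ I_P){T ⊗ (M⁻¹ + R̃)⁻¹ + Ũ⁻¹}⁻¹(𝒞ᵀ ⊗ I_P)(I_n ⊗ L)], and Φ^B(M) = tr{(M + S⁻¹)⁻¹ S⁻¹ Ṽ L Ṽ S⁻¹}. Then for any two symmetric positive definite P×P matrices M_1, M_2: Φ_α(M_1) ≤ Φ_α(M_2) if and only if Φ_θ(M_1)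 ≤ Φ_θ(M_2), if and only if Φ^B(M_1) ≤ Φ^B(M_2). -/
noncomputable section
open Matrix Kronecker

/-- The centering matrix `T = I_K − (1/K)·1_K 1_Kᵀ`. -/
def Tmat (K : ℕ) : Matrix (Fin K) (Fin K) ℝ := 1 - (K : ℝ)⁻¹ • onesMat (Fin K)

/-- The MSE matrix `Σ(M) = {T ⊗ (M⁻¹ + R̃)⁻¹ + Ũ⁻¹}⁻¹` with `Ũ = (a1·I_K + a·1_K 1_Kᵀ) ⊗ Ṽ`. -/
def SigmaMat (K P : ℕ) (R V : Matrix (Fin P) (Fin P) ℝ) (a1 a : ℝ)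
    (M : Matrix (Fin P) (Fin P) ℝ) : Matrix (Fin K × Fin P) (Fin K × Fin P) ℝ :=
  (Tmat K ⊗ₖ (M⁻¹ + R)⁻¹
    + ((a1 • (1 : Matrix (Fin K) (Fin K) ℝ) + a • onesMat (Fin K)) ⊗ₖ V)⁻¹)⁻¹

/-- Weighted A-criterion for prediction of the genotype effects. -/
def PhiAlpha (K P : ℕ) (R V L : Matrix (Fin P) (Fin P) ℝ) (a1 a : ℝ)
    (M : Matrix (Fin P) (Fin P) ℝ) : ℝ :=
  trace (SigmaMat K P R V a1 a M * ((1 : Matrix (Fin K) (Fin K) ℝ) ⊗ₖ L))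

/-- Weighted A-criterion for prediction of the pairwise linear contrasts. -/
def PhiTheta (K P : ℕ) (R V L : Matrix (Fin P) (Fin P) ℝ) (a1 a : ℝ)
    (M : Matrix (Fin P) (Fin P) ℝ) : ℝ :=
  trace ((Cmat K ⊗ₖ (1 : Matrix (Fin P) (Fin P) ℝ)) * SigmaMat K P R V a1 a M
    * ((Cmat K)ᵀ ⊗ₖ (1 : Matrix (Fin P) (Fin P) ℝ))
    * ((1 : Matrix {p : Fin K × Fin K // p.1 < p.2}
          {p : Fin K × Fin K // p.1 < p.2} ℝ) ⊗ₖ L))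

/-- The Bayesian linear criterion `Φ^B(M) = tr{(M + S⁻¹)⁻¹ S⁻¹ Ṽ L Ṽ S⁻¹}`, `S = R̃ + a1·Ṽ`. -/
def PhiB (P : ℕ) (R V L : Matrix (Fin P) (Fin P) ℝ) (a1 : ℝ)
    (M : Matrix (Fin P) (Fin P) ℝ) : ℝ :=
  trace ((M + (R + a1 • V)⁻¹)⁻¹ * (R + a1 • V)⁻¹ * V * L * V * (R + a1 • V)⁻¹)

namespace Stmt10Aux

variable {P : ℕ}

lemma posDef_add {A B : Matrix (Fin P) (Fin P) ℝ} (hA : A.PosDef) (hB : B.PosDef) :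
    (A + B).PosDef := by
  exact hA.add hB

lemma posDef_smul {A : Matrix (Fin P) (Fin P) ℝ} {c : ℝ} (hc : 0 < c) (hA : A.PosDef) :
    (c • A).PosDef := by
  exact hA.smul hc

lemma mul_inv_pd {A : Matrix (Fin P) (Fin P) ℝ} (hA : A.PosDef) : A * A⁻¹ = 1 :=
  A.mul_nonsing_inv hA.det_pos.ne'.isUnit

lemma inv_mul_pd {A : Matrix (Fin P) (Fin P) ℝ} (hA : A.PosDef) : A⁻¹ * A = 1 :=
  A.nonsing_inv_mul hA.det_pos.ne'.isUnit

lemma inv_inv_pd {A : Matrix (Fin P) (Fin P) ℝ} (hA : A.PosDef) : A⁻¹⁻¹ = A :=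
  A.nonsing_inv_nonsing_inv hA.det_pos.ne'.isUnit

/-- Woodbury form 1. -/
lemma woodbury1 {Pm Q : Matrix (Fin P) (Fin P) ℝ} (hP : Pm.PosDef) (hQ : Q.PosDef) :
    (Pm⁻¹ + Q)⁻¹ = Pm - Pm * (Pm + Q⁻¹)⁻¹ * Pm := by
  apply inv_eq_right_inv
  have hW : (Pm + Q⁻¹).PosDef := posDef_add hP hQ.inv
  have e1 : (Pm⁻¹ + Q) * Pm = Q * (Pm + Q⁻¹) := by
    rw [Matrix.add_mul, Matrix.mul_add, inv_mul_pd hP, mul_inv_pd hQ, add_comm]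
  calc (Pm⁻¹ + Q) * (Pm - Pm * (Pm + Q⁻¹)⁻¹ * Pm)
      = (Pm⁻¹ + Q) * Pm - ((Pm⁻¹ + Q) * Pm) * ((Pm + Q⁻¹)⁻¹ * Pm) := by
        rw [Matrix.mul_sub]; simp only [Matrix.mul_assoc]
    _ = Q * (Pm + Q⁻¹) - Q * ((Pm + Q⁻¹) * (Pm + Q⁻¹)⁻¹) * Pm := by
        rw [e1]; simp only [Matrix.mul_assoc]
    _ = Q * (Pm + Q⁻¹) - Q * Pm := by rw [mul_inv_pd hW, Matrix.mul_one]
    _ = 1 := by rw [Matrix.mul_add, mul_inv_pd hQ]; abel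

/-- Woodbury form 2. -/
lemma woodbury2 {Pm Q : Matrix (Fin P) (Fin P) ℝ} (hP : Pm.PosDef) (hQ : Q.PosDef) :
    (Pm⁻¹ + Q)⁻¹ = Q⁻¹ - Q⁻¹ * (Pm + Q⁻¹)⁻¹ * Q⁻¹ := by
  apply inv_eq_right_inv
  have hW : (Pm + Q⁻¹).PosDef := posDef_add hP hQ.inv
  have e1 : (Pm⁻¹ + Q) * Q⁻¹ = Pm⁻¹ * (Pm + Q⁻¹) := by
    rw [Matrix.add_mul, Matrix.mul_add, inv_mul_pd hP, mul_inv_pd hQ, add_comm]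
  calc (Pm⁻¹ + Q) * (Q⁻¹ - Q⁻¹ * (Pm + Q⁻¹)⁻¹ * Q⁻¹)
      = (Pm⁻¹ + Q) * Q⁻¹ - ((Pm⁻¹ + Q) * Q⁻¹) * ((Pm + Q⁻¹)⁻¹ * Q⁻¹) := by
        rw [Matrix.mul_sub]; simp only [Matrix.mul_assoc]
    _ = Pm⁻¹ * (Pm + Q⁻¹) - Pm⁻¹ * ((Pm + Q⁻¹) * (Pm + Q⁻¹)⁻¹) * Q⁻¹ := by
        rw [e1]; simp only [Matrix.mul_assoc]
    _ = Pm⁻¹ * (Pm + Q⁻¹) - Pm⁻¹ * Q⁻¹ := by rw [mul_inv_pd hW, Matrix.mul_one]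
    _ = 1 := by rw [Matrix.mul_add, inv_mul_pd hP]; abel

lemma onesMat_mul_onesMat (K : ℕ) :
    onesMat (Fin K) * onesMat (Fin K) = (K : ℝ) • onesMat (Fin K) := by
  ext i j
  simp [onesMat, Matrix.mul_apply, Finset.sum_const]

lemma Tmat_mul_onesMat {K : ℕ} (hK : (K:ℝ) ≠ 0) : Tmat K * onesMat (Fin K) = 0 := by
  rw [Tmat, Matrix.sub_mul, Matrix.one_mul, Matrix.smul_mul, onesMat_mul_onesMat,
    smul_smul, inv_mul_cancel₀ hK, one_smul, sub_self]

lemma onesMat_mul_Tmat {K : ℕ} (hK : (K:ℝ) ≠ 0) : onesMat (Fin K) * Tmat K = 0 := by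
  rw [Tmat, Matrix.mul_sub, Matrix.mul_one, Matrix.mul_smul, onesMat_mul_onesMat,
    smul_smul, inv_mul_cancel₀ hK, one_smul, sub_self]

lemma Tmat_mul_Tmat {K : ℕ} (hK : (K:ℝ) ≠ 0) : Tmat K * Tmat K = Tmat K := by
  have h := onesMat_mul_Tmat hK
  nth_rewrite 1 [Tmat]
  rw [Matrix.sub_mul, Matrix.one_mul, Matrix.smul_mul, h, smul_zero, sub_zero]

lemma Tmat_add {K : ℕ} : Tmat K + (K:ℝ)⁻¹ • onesMat (Fin K) = 1 := by
  rw [Tmat]; abel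

lemma trace_onesMat (K : ℕ) : trace (onesMat (Fin K)) = (K:ℝ) := by
  simp [onesMat, trace, Matrix.diag, Finset.sum_const]

lemma trace_Tmat {K : ℕ} (h : 0 < K) : trace (Tmat K) = (K:ℝ) - 1 := by
  have hK : (K:ℝ) ≠ 0 := Nat.cast_ne_zero.mpr h.ne'
  rw [Tmat, trace_sub, trace_smul, trace_onesMat, trace_one]
  simp [hK, Fintype.card_fin]

lemma Cmat_mul_onesMat (K : ℕ) : Cmat K * onesMat (Fin K) = 0 := by
  ext q j
  simp [Cmat, onesMat, Matrix.mul_apply, sub_mul, Finset.sum_sub_distrib]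

lemma Cmat_mul_Tmat {K : ℕ} : Cmat K * Tmat K = Cmat K := by
  rw [Tmat, Matrix.mul_sub, Matrix.mul_one, Matrix.mul_smul, Cmat_mul_onesMat]
  simp

lemma trace_Cmat_mul_transpose (K : ℕ) :
    trace (Cmat K * (Cmat K)ᵀ)
      = 2 * (Fintype.card {p : Fin K × Fin K // p.1 < p.2} : ℝ) := by
  have h : ∀ q : {p : Fin K × Fin K // p.1 < p.2},
      (Cmat K * (Cmat K)ᵀ) q q = 2 := by
    intro q
    have hne : q.1.1 ≠ q.1.2 := ne_of_lt q.2
    simp only [Matrix.mul_apply, Cmat, transpose_apply, Matrix.of_apply]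
    rw [Finset.sum_eq_add_of_mem q.1.1 q.1.2 (Finset.mem_univ _) (Finset.mem_univ _) hne]
    · simp [hne, hne.symm]
      norm_num
    · intro c _ hc
      simp [hc.1, hc.2]
  simp [trace, Matrix.diag, h, Finset.sum_const, mul_comm]

/-- Multiplication rule for matrices of the block Kronecker form `T⊗A + J⊗B`. -/
lemma TJ_mul {K : ℕ} (hK : (K:ℝ) ≠ 0) (A B A' B' : Matrix (Fin P) (Fin P) ℝ) :
    (Tmat K ⊗ₖ A + onesMat (Fin K) ⊗ₖ B) * (Tmat K ⊗ₖ A' + onesMat (Fin K) ⊗ₖ B')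
      = Tmat K ⊗ₖ (A * A') + onesMat (Fin K) ⊗ₖ ((K:ℝ) • (B * B')) := by
  rw [Matrix.add_mul, Matrix.mul_add, Matrix.mul_add, ← mul_kronecker_mul, ← mul_kronecker_mul,
    ← mul_kronecker_mul, ← mul_kronecker_mul, Tmat_mul_Tmat hK, Tmat_mul_onesMat hK,
    onesMat_mul_Tmat hK, onesMat_mul_onesMat, smul_kronecker, kronecker_smul]
  simp only [zero_kronecker, zero_add, add_zero]

/-- The identity as a block Kronecker form. -/
lemma TJ_one {K : ℕ} :
    Tmat K ⊗ₖ (1 : Matrix (Fin P) (Fin P) ℝ)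
      + onesMat (Fin K) ⊗ₖ ((K:ℝ)⁻¹ • (1 : Matrix (Fin P) (Fin P) ℝ)) = 1 := by
  rw [kronecker_smul, ← smul_kronecker, ← add_kronecker, Tmat_add, one_kronecker_one]

end Stmt10Aux

open Stmt10Aux

/-- Decomposition of the MSE matrix along the orthogonal idempotents `T` and `J/K`. -/
lemma sigma_decomp (K P : ℕ) (hK : 2 ≤ K)
    (R V M : Matrix (Fin P) (Fin P) ℝ) (hR : R.PosDef) (hV : V.PosDef) (hM : M.PosDef)
    (a1 a : ℝ) (ha1 : 0 < a1) (ha : 0 ≤ a) :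
    SigmaMat K P R V a1 a M
      = Tmat K ⊗ₖ ((M⁻¹ + R)⁻¹ + a1⁻¹ • V⁻¹)⁻¹
        + onesMat (Fin K) ⊗ₖ (((a1 + (K:ℝ) * a) / (K:ℝ)) • V) := by
  have hKpos : (0:ℝ) < (K:ℝ) := by
    have : 0 < K := lt_of_lt_of_le two_pos hK
    exact_mod_cast this
  have hK0 : (K:ℝ) ≠ 0 := hKpos.ne'
  have hsum : (0:ℝ) < a1 + (K:ℝ) * a := by
    have : (0:ℝ) ≤ (K:ℝ) * a := mul_nonneg hKpos.le ha
    linarith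
  set c : ℝ := ((a1 + (K:ℝ) * a) * (K:ℝ))⁻¹ with hc
  set d : ℝ := (a1 + (K:ℝ) * a) / (K:ℝ) with hd
  have hVV : V * V⁻¹ = 1 := mul_inv_pd hV
  have hVV' : V⁻¹ * V = 1 := inv_mul_pd hV
  -- rewrite N = a1·I + a·J in the T/J basis
  have hN : a1 • (1 : Matrix (Fin K) (Fin K) ℝ) + a • onesMat (Fin K)
      = a1 • Tmat K + (a1 * (K:ℝ)⁻¹ + a) • onesMat (Fin K) := by
    rw [Tmat]; rw [smul_sub, add_smul, smul_smul]; abel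
  -- the inverse of U = N ⊗ V
  have hU : ((a1 • (1 : Matrix (Fin K) (Fin K) ℝ) + a • onesMat (Fin K)) ⊗ₖ V)⁻¹
      = Tmat K ⊗ₖ (a1⁻¹ • V⁻¹) + onesMat (Fin K) ⊗ₖ (c • V⁻¹) := by
    apply inv_eq_right_inv
    rw [hN, add_kronecker, smul_kronecker, smul_kronecker, ← kronecker_smul, ← kronecker_smul,
      TJ_mul hK0]
    have e1 : (a1 • V) * (a1⁻¹ • V⁻¹) = 1 := by
      rw [Matrix.smul_mul, Matrix.mul_smul, hVV, smul_smul, mul_inv_cancel₀ ha1.ne', one_smul]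
    have e2 : (K:ℝ) • (((a1 * (K:ℝ)⁻¹ + a) • V) * (c • V⁻¹))
        = (K:ℝ)⁻¹ • (1 : Matrix (Fin P) (Fin P) ℝ) := by
      rw [Matrix.smul_mul, Matrix.mul_smul, hVV, smul_smul, smul_smul]
      congr 1
      rw [hc]
      field_simp
      try ring
      try tauto
    rw [e1, e2, TJ_one]
  -- now invert the sum
  have hA' : (M⁻¹ + R).PosDef := posDef_add hM.inv hR
  have hX : ((M⁻¹ + R)⁻¹ + a1⁻¹ • V⁻¹).PosDef :=
    posDef_add hA'.inv (posDef_smul (inv_pos.mpr ha1) hV.inv)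
  rw [SigmaMat, hU, ← add_assoc, ← kronecker_add]
  apply inv_eq_right_inv
  rw [TJ_mul hK0, mul_inv_pd hX]
  have e3 : (K:ℝ) • ((c • V⁻¹) * (d • V)) = (K:ℝ)⁻¹ • (1 : Matrix (Fin P) (Fin P) ℝ) := by
    rw [Matrix.smul_mul, Matrix.mul_smul, hVV', smul_smul, smul_smul]
    congr 1
    rw [hc, hd]
    field_simp
    try ring
    try tauto
  rw [e3, TJ_one]

theorem stmt10 (K P : ℕ) (hK : 2 ≤ K) (hP : 1 ≤ P)
    (R V : Matrix (Fin P) (Fin P) ℝ) (hR : R.PosDef) (hV : V.PosDef)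
    (a1 a : ℝ) (ha1 : 0 < a1) (ha : 0 ≤ a)
    (ℓ : Fin P → ℝ) (hℓ : ∀ i, 0 ≤ ℓ i)
    (L : Matrix (Fin P) (Fin P) ℝ) (hL : L = Matrix.diagonal ℓ)
    (M1 M2 : Matrix (Fin P) (Fin P) ℝ) (hM1 : M1.PosDef) (hM2 : M2.PosDef) :
    (PhiAlpha K P R V L a1 a M1 ≤ PhiAlpha K P R V L a1 a M2 ↔
      PhiTheta K P R V L a1 a M1 ≤ PhiTheta K P R V L a1 a M2) ∧
    (PhiTheta K P R V L a1 a M1 ≤ PhiTheta K P R V L a1 a M2 ↔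
      PhiB P R V L a1 M1 ≤ PhiB P R V L a1 M2) := by
  classical
  have hKposN : 0 < K := lt_of_lt_of_le two_pos hK
  have hKpos : (0:ℝ) < (K:ℝ) := by exact_mod_cast hKposN
  have hK0 : (K:ℝ) ≠ 0 := hKpos.ne'
  set d : ℝ := (a1 + (K:ℝ) * a) / (K:ℝ) with hd
  set S : Matrix (Fin P) (Fin P) ℝ := R + a1 • V with hS
  have hSpd : S.PosDef := posDef_add hR (posDef_smul ha1 hV)
  set n₀ : ℝ := (Fintype.card {p : Fin K × Fin K // p.1 < p.2} : ℝ) with hn₀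
  have hn₀pos : 0 < n₀ := by
    have : Nonempty {p : Fin K × Fin K // p.1 < p.2} :=
      ⟨⟨(⟨0, by omega⟩, ⟨1, by omega⟩), by simp [Fin.lt_def]⟩⟩
    have := Fintype.card_pos_iff.mpr this
    rw [hn₀]; exact_mod_cast this
  -- the key pointwise identities
  have key : ∀ M : Matrix (Fin P) (Fin P) ℝ, M.PosDef →
      PhiAlpha K P R V L a1 a M
          = ((K:ℝ) - 1) * (a1 * trace (V * L) - a1^2 * trace (V * S⁻¹ * V * L)
              + a1^2 * PhiB P R V L a1 M) + (K:ℝ) * (d * trace (V * L))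
        ∧ PhiTheta K P R V L a1 a M
          = 2 * n₀ * (a1 * trace (V * L) - a1^2 * trace (V * S⁻¹ * V * L)
              + a1^2 * PhiB P R V L a1 M) := by
    intro M hM
    set B : Matrix (Fin P) (Fin P) ℝ := ((M⁻¹ + R)⁻¹ + a1⁻¹ • V⁻¹)⁻¹ with hB
    have hsig := sigma_decomp K P hK R V M hR hV hM a1 a ha1 ha
    -- the value of trace (B * L)
    have hBval : trace (B * L)
        = a1 * trace (V * L) - a1^2 * trace (V * S⁻¹ * V * L)
          + a1^2 * PhiB P R V L a1 M := by
      have hA' : (M⁻¹ + R).PosDef := posDef_add hM.inv hR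
      have ha1V : (a1 • V).PosDef := posDef_smul ha1 hV
      -- rewrite a1⁻¹ • V⁻¹ as (a1 • V)⁻¹
      have hsmulinv : a1⁻¹ • V⁻¹ = (a1 • V)⁻¹ := by
        symm; apply inv_eq_right_inv
        rw [Matrix.smul_mul, Matrix.mul_smul, mul_inv_pd hV, smul_smul,
          mul_inv_cancel₀ ha1.ne', one_smul]
      have hw1 : B = a1 • V - (a1 • V) * (M⁻¹ + S)⁻¹ * (a1 • V) := by
        rw [hB, hsmulinv, add_comm, woodbury1 ha1V hA'.inv, inv_inv_pd hA']
        have : a1 • V + (M⁻¹ + R) = M⁻¹ + S := by rw [hS]; abel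
        rw [this]
      have hw2 : (M⁻¹ + S)⁻¹ = S⁻¹ - S⁻¹ * (M + S⁻¹)⁻¹ * S⁻¹ := woodbury2 hM hSpd
      have hcyc : trace (V * (S⁻¹ * ((M + S⁻¹)⁻¹ * (S⁻¹ * (V * L))))) = PhiB P R V L a1 M := by
        have e : V * (S⁻¹ * ((M + S⁻¹)⁻¹ * (S⁻¹ * (V * L))))
            = (V * S⁻¹) * ((M + S⁻¹)⁻¹ * S⁻¹ * V * L) := by
          simp only [Matrix.mul_assoc]
        rw [e, trace_mul_comm, PhiB, hS]
        simp only [Matrix.mul_assoc]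
      have hass : trace (V * S⁻¹ * V * L) = trace (V * (S⁻¹ * (V * L))) := by
        simp only [Matrix.mul_assoc]
      have expand : trace (B * L)
          = a1 * trace (V * L) - a1^2 * trace (V * (S⁻¹ * (V * L)))
            + a1^2 * trace (V * (S⁻¹ * ((M + S⁻¹)⁻¹ * (S⁻¹ * (V * L))))) := by
        rw [hw1, hw2]
        simp only [Matrix.sub_mul, Matrix.mul_sub, Matrix.smul_mul, Matrix.mul_smul,
          trace_sub, trace_smul, smul_eq_mul, Matrix.mul_assoc]
        ring
      rw [expand, hcyc, hass]
    constructor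
    · -- PhiAlpha
      rw [PhiAlpha, hsig, Matrix.add_mul, ← mul_kronecker_mul, ← mul_kronecker_mul]
      simp only [Matrix.mul_one, Matrix.one_mul]
      rw [trace_add, trace_kronecker, trace_kronecker, trace_Tmat hKposN, trace_onesMat,
        Matrix.smul_mul, trace_smul, smul_eq_mul, ← hB, hBval, hd]
      try ring
    · -- PhiTheta
      rw [PhiTheta, hsig, Matrix.mul_add, ← mul_kronecker_mul, ← mul_kronecker_mul,
        Cmat_mul_Tmat, Cmat_mul_onesMat, zero_kronecker, add_zero, ← mul_kronecker_mul,
        ← mul_kronecker_mul]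
      simp only [Matrix.mul_one, Matrix.one_mul]
      rw [trace_kronecker, trace_Cmat_mul_transpose, ← hB, hBval, ← hn₀]
      try ring
  obtain ⟨hA1, hT1⟩ := key M1 hM1
  obtain ⟨hA2, hT2⟩ := key M2 hM2
  have hKm1 : (0:ℝ) < (K:ℝ) - 1 := by
    have : (2:ℝ) ≤ (K:ℝ) := by exact_mod_cast hK
    linarith
  have ha1sq : (0:ℝ) < a1 ^ 2 := by positivity
  have h2n : (0:ℝ) < 2 * n₀ := by linarith
  set u1 : ℝ := a1 * trace (V * L) - a1^2 * trace (V * S⁻¹ * V * L)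
      + a1^2 * PhiB P R V L a1 M1 with hu1
  set u2 : ℝ := a1 * trace (V * L) - a1^2 * trace (V * S⁻¹ * V * L)
      + a1^2 * PhiB P R V L a1 M2 with hu2
  have e1 : (PhiAlpha K P R V L a1 a M1 ≤ PhiAlpha K P R V L a1 a M2) ↔ u1 ≤ u2 := by
    rw [hA1, hA2, add_le_add_iff_right, mul_le_mul_iff_right₀ hKm1]
  have e2 : (PhiTheta K P R V L a1 a M1 ≤ PhiTheta K P R V L a1 a M2) ↔ u1 ≤ u2 := by
    rw [hT1, hT2, mul_le_mul_iff_right₀ h2n]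
  have e3 : (u1 ≤ u2) ↔ PhiB P R V L a1 M1 ≤ PhiB P R V L a1 M2 := by
    rw [hu1, hu2]
    constructor
    · intro h
      have h' : a1 ^ 2 * PhiB P R V L a1 M1 ≤ a1 ^ 2 * PhiB P R V L a1 M2 := by linarith
      exact le_of_mul_le_mul_left h' ha1sq
    · intro h
      have h' := mul_le_mul_of_nonneg_left h ha1sq.le
      linarith
  exact ⟨e1.trans e2.symm, e2.trans e3⟩
end
end

section
/- Let m ≥ 1 and P ≥ 1 be integers, let A and Ṽ be symmetric positive definite P×P real matrices, let b_1 > 0 and b ≥ 0, and set v = mb/(mb + b_1), V_1 = b_1 Ṽ, V_2 = (mb + b_1) Ṽ. Then the matrix I_m ⊗ (A + (1/b_1)·Ṽ⁻¹) − (1/m)·1_m 1_mᵀ ⊗ (A + (v/b_1)·Ṽ⁻¹) is invertible and its inverse equals (I_m − (1/m)·1_m 1_mᵀ) ⊗ (A + V_1⁻¹)⁻¹ + (1/m)·1_m 1_mᵀ ⊗ V_2. -/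
noncomputable section
open Matrix Kronecker

lemma smul_posDef {n : Type*} [Fintype n] {M : Matrix n n ℝ} (hM : M.PosDef)
    {c : ℝ} (hc : 0 < c) : (c • M).PosDef := by
  refine Matrix.PosDef.of_dotProduct_mulVec_pos ?_ (fun x hx => ?_)
  · show (c • M)ᴴ = c • M
    rw [Matrix.conjTranspose_smul, star_trivial, hM.1]
  · have := hM.dotProduct_mulVec_pos hx
    simp only [smul_mulVec, dotProduct_smul, smul_eq_mul]
    exact mul_pos hc this


lemma sub_kron {l p : Type*} [Fintype l] [Fintype p] (A B : Matrix l l ℝ) (C : Matrix p p ℝ) :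
    (A - B) ⊗ₖ C = A ⊗ₖ C - B ⊗ₖ C := by
  ext ⟨i, j⟩ ⟨k, r⟩
  simp [Matrix.kroneckerMap_apply, sub_mul]

lemma kron_sub {l p : Type*} [Fintype l] [Fintype p] (A : Matrix l l ℝ) (B C : Matrix p p ℝ) :
    A ⊗ₖ (B - C) = A ⊗ₖ B - A ⊗ₖ C := by
  ext ⟨i, j⟩ ⟨k, r⟩
  simp [Matrix.kroneckerMap_apply, mul_sub]

theorem stmt12 (m P : ℕ) (hm : 1 ≤ m) (hP : 1 ≤ P)
    (A V : Matrix (Fin P) (Fin P) ℝ) (hA : A.PosDef) (hV : V.PosDef)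
    (b1 b : ℝ) (hb1 : 0 < b1) (hb : 0 ≤ b)
    (v : ℝ) (hv : v = m * b / (m * b + b1))
    (V1 : Matrix (Fin P) (Fin P) ℝ) (hV1 : V1 = b1 • V)
    (V2 : Matrix (Fin P) (Fin P) ℝ) (hV2 : V2 = (m * b + b1) • V) :
    IsUnit ((1 : Matrix (Fin m) (Fin m) ℝ) ⊗ₖ (A + b1⁻¹ • V⁻¹)
        - ((m : ℝ)⁻¹ • onesMat (Fin m)) ⊗ₖ (A + (v / b1) • V⁻¹)) ∧
    ((1 : Matrix (Fin m) (Fin m) ℝ) ⊗ₖ (A + b1⁻¹ • V⁻¹)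
        - ((m : ℝ)⁻¹ • onesMat (Fin m)) ⊗ₖ (A + (v / b1) • V⁻¹))⁻¹
      = ((1 : Matrix (Fin m) (Fin m) ℝ) - (m : ℝ)⁻¹ • onesMat (Fin m)) ⊗ₖ (A + V1⁻¹)⁻¹
        + ((m : ℝ)⁻¹ • onesMat (Fin m)) ⊗ₖ V2 := by
  have hmR : (0:ℝ) < m := by exact_mod_cast hm
  have hmb : (0:ℝ) < m * b + b1 := by positivity
  -- scalar identities
  have hscal : b1⁻¹ - v / b1 = (m * b + b1)⁻¹ := by
    rw [hv]; field_simp; ring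
  -- J idempotent
  set J : Matrix (Fin m) (Fin m) ℝ := (m : ℝ)⁻¹ • onesMat (Fin m) with hJ
  have hones : onesMat (Fin m) * onesMat (Fin m) = (m:ℝ) • onesMat (Fin m) := by
    ext i k
    simp [onesMat, Matrix.mul_apply]
  have hJJ : J * J = J := by
    rw [hJ, Matrix.smul_mul, Matrix.mul_smul, hones, smul_smul, smul_smul]
    congr 1
    field_simp
  -- B := A + b1⁻¹ • V⁻¹ is posdef, and equals (A + V1⁻¹)
  set B : Matrix (Fin P) (Fin P) ℝ := A + b1⁻¹ • V⁻¹ with hBdef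
  have hBpd : B.PosDef := hA.add (smul_posDef hV.inv (by positivity))
  have hV1inv : V1⁻¹ = b1⁻¹ • V⁻¹ := by
    rw [hV1]
    have := Matrix.inv_smul' (Units.mk0 b1 (ne_of_gt hb1)) hV.det_pos.ne'.isUnit (A := V)
    simpa [Units.smul_def, Units.val_inv_eq_inv_val] using this
  have hBeq : A + V1⁻¹ = B := by rw [hV1inv]
  -- V2 posdef
  have hV2pd : V2.PosDef := by rw [hV2]; exact smul_posDef hV hmb
  have hV2inv : V2⁻¹ = (m * b + b1)⁻¹ • V⁻¹ := by
    rw [hV2]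
    have := Matrix.inv_smul' (Units.mk0 (m * b + b1) (ne_of_gt hmb)) hV.det_pos.ne'.isUnit (A := V)
    simpa [Units.smul_def, Units.val_inv_eq_inv_val] using this
  -- rewrite the big matrix
  set M := (1 : Matrix (Fin m) (Fin m) ℝ) ⊗ₖ B - J ⊗ₖ (A + (v / b1) • V⁻¹) with hMdef
  set N := ((1 : Matrix (Fin m) (Fin m) ℝ) - J) ⊗ₖ B⁻¹ + J ⊗ₖ V2 with hNdef
  have hMeq : M = ((1 : Matrix (Fin m) (Fin m) ℝ) - J) ⊗ₖ B + J ⊗ₖ V2⁻¹ := by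
    have hdiff : B - (A + (v / b1) • V⁻¹) = V2⁻¹ := by
      rw [hV2inv, hBdef, ← hscal, sub_smul]
      abel
    have hC : A + (v / b1) • V⁻¹ = B - V2⁻¹ := by rw [← hdiff]; abel
    rw [hMdef, hC, kron_sub, sub_kron]
    abel
  have hBB : B * B⁻¹ = 1 := Matrix.mul_nonsing_inv _ hBpd.det_pos.ne'.isUnit
  have hBB' : B⁻¹ * B = 1 := Matrix.nonsing_inv_mul _ hBpd.det_pos.ne'.isUnit
  have hVV : V2⁻¹ * V2 = 1 := Matrix.nonsing_inv_mul _ hV2pd.det_pos.ne'.isUnit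
  have hVV' : V2 * V2⁻¹ = 1 := Matrix.mul_nonsing_inv _ hV2pd.det_pos.ne'.isUnit
  have hIJ : ((1 : Matrix (Fin m) (Fin m) ℝ) - J) * J = 0 := by
    rw [Matrix.sub_mul, Matrix.one_mul, hJJ, sub_self]
  have hJI : J * ((1 : Matrix (Fin m) (Fin m) ℝ) - J) = 0 := by
    rw [Matrix.mul_sub, Matrix.mul_one, hJJ, sub_self]
  have hIJI : ((1 : Matrix (Fin m) (Fin m) ℝ) - J) * ((1 : Matrix (Fin m) (Fin m) ℝ) - J)
      = (1 : Matrix (Fin m) (Fin m) ℝ) - J := by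
    rw [Matrix.mul_sub, Matrix.mul_one, Matrix.sub_mul, Matrix.one_mul, hJJ]
    abel
  have hMN : M * N = 1 := by
    rw [hMeq, hNdef, Matrix.add_mul, Matrix.mul_add, Matrix.mul_add,
      ← Matrix.mul_kronecker_mul, ← Matrix.mul_kronecker_mul, ← Matrix.mul_kronecker_mul,
      ← Matrix.mul_kronecker_mul, hIJI, hIJ, hJI, hJJ, hBB, hVV,
      Matrix.zero_kronecker, Matrix.zero_kronecker]
    rw [add_zero, zero_add, ← Matrix.add_kronecker,
      show (1 : Matrix (Fin m) (Fin m) ℝ) - J + J = 1 by abel, Matrix.one_kronecker_one]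
  have hNM : N * M = 1 := by
    rw [hMeq, hNdef, Matrix.add_mul, Matrix.mul_add, Matrix.mul_add,
      ← Matrix.mul_kronecker_mul, ← Matrix.mul_kronecker_mul, ← Matrix.mul_kronecker_mul,
      ← Matrix.mul_kronecker_mul, hIJI, hIJ, hJI, hJJ, hBB', hVV',
      Matrix.zero_kronecker, Matrix.zero_kronecker]
    rw [add_zero, zero_add, ← Matrix.add_kronecker,
      show (1 : Matrix (Fin m) (Fin m) ℝ) - J + J = 1 by abel, Matrix.one_kronecker_one]
  refine ⟨(Matrix.isUnit_iff_isUnit_det _).2 (Matrix.isUnit_det_of_right_inverse hMN), ?_⟩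
  have : M⁻¹ = N := Matrix.inv_eq_right_inv hMN
  rw [this, hBeq]
end
end

section
/- Let f ≥ 1 and m ≥ 1 be integers with K = f·m ≥ 2, let r ∈ [0, 1) and σ² > 0, and set b = σ²·r, b_1 = σ²·(1 − r), and N = I_f ⊗ (b_1·I_m + b·1_m 1_mᵀ). Define asv(N) = (1/(K−1))·tr[N·(I_K − (1/K)·1_K 1_Kᵀ)]. Then asv(N) = σ²·(K − 1 − (m−1)·r)/(K − 1); in particular K − 1 − (m−1)·r > 0, and asv(N) = 1 if and only if σ² = (K−1)/(K − 1 − (m−1)·r). -/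
noncomputable section
open Matrix Kronecker

lemma trace_onesMat (ι : Type*) [Fintype ι] : trace (onesMat ι) = (Fintype.card ι : ℝ) := by
  simp [Matrix.trace, Matrix.diag, onesMat]

lemma onesMat_mul_onesMat (ι : Type*) [Fintype ι] :
    onesMat ι * onesMat ι = (Fintype.card ι : ℝ) • onesMat ι := by
  ext i j; simp [Matrix.mul_apply, onesMat]

lemma onesMat_prod (ι κ : Type*) :
    onesMat (ι × κ) = onesMat ι ⊗ₖ onesMat κ := by
  ext ⟨i,k⟩ ⟨j,l⟩; simp [onesMat]

theorem stmt19 (f m : ℕ) (hf : 1 ≤ f) (hm : 1 ≤ m) (hK : 2 ≤ f * m)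
    (r σ2 : ℝ) (hr0 : 0 ≤ r) (hr1 : r < 1) (hσ2 : 0 < σ2)
    (b b1 : ℝ) (hb : b = σ2 * r) (hb1 : b1 = σ2 * (1 - r))
    (N : Matrix (Fin f × Fin m) (Fin f × Fin m) ℝ)
    (hN : N = (1 : Matrix (Fin f) (Fin f) ℝ)
        ⊗ₖ (b1 • (1 : Matrix (Fin m) (Fin m) ℝ) + b • onesMat (Fin m)))
    (asv : ℝ)
    (hasv : asv = ((f : ℝ) * m - 1)⁻¹
        * trace (N * ((1 : Matrix (Fin f × Fin m) (Fin f × Fin m) ℝ)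
            - ((f : ℝ) * m)⁻¹ • onesMat (Fin f × Fin m)))) :
    asv = σ2 * ((f : ℝ) * m - 1 - ((m : ℝ) - 1) * r) / ((f : ℝ) * m - 1) ∧
    0 < (f : ℝ) * m - 1 - ((m : ℝ) - 1) * r ∧
    (asv = 1 ↔ σ2 = ((f : ℝ) * m - 1) / ((f : ℝ) * m - 1 - ((m : ℝ) - 1) * r)) := by
  have hK2 : (2:ℝ) ≤ (f:ℝ) * m := by exact_mod_cast hK
  have hK1 : (0:ℝ) < (f:ℝ) * m - 1 := by linarith
  have hKne : ((f:ℝ) * m) ≠ 0 := by positivity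
  have hmf : (m:ℝ) ≤ (f:ℝ) * m := by
    have : (1:ℝ) ≤ (f:ℝ) := by exact_mod_cast hf
    nlinarith [Nat.one_le_iff_ne_zero.mp hm, (by exact_mod_cast hm : (1:ℝ) ≤ (m:ℝ))]
  -- positivity of denominator
  have hD : 0 < (f : ℝ) * m - 1 - ((m : ℝ) - 1) * r := by
    nlinarith [mul_pos (by linarith : (0:ℝ) < 1 - r) hK1,
      mul_nonneg hr0 (by linarith : (0:ℝ) ≤ (f:ℝ)*m - m)]
  -- trace computation
  have htrN : trace N = (f:ℝ) * (b1 * m + b * m) := by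
    rw [hN, trace_kronecker]
    simp [trace_onesMat, Matrix.trace_smul, Matrix.trace_one, mul_comm]
  have hNJ : N * onesMat (Fin f × Fin m)
      = (onesMat (Fin f)) ⊗ₖ ((b1 + b * m) • onesMat (Fin m)) := by
    rw [hN, onesMat_prod, ← Matrix.mul_kronecker_mul, Matrix.one_mul]
    congr 1
    rw [Matrix.add_mul, Matrix.smul_mul, Matrix.smul_mul, Matrix.one_mul,
      onesMat_mul_onesMat]
    simp [add_smul, smul_smul, mul_comm]
  have htrNJ : trace (N * onesMat (Fin f × Fin m)) = (f:ℝ) * ((b1 + b * m) * m) := by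
    rw [hNJ, trace_kronecker, trace_onesMat, Matrix.trace_smul, trace_onesMat]
    simp [mul_comm]
  have hT : trace (N * ((1 : Matrix (Fin f × Fin m) (Fin f × Fin m) ℝ)
            - ((f : ℝ) * m)⁻¹ • onesMat (Fin f × Fin m)))
      = (f:ℝ) * (b1 * m + b * m) - ((f:ℝ)*m)⁻¹ * ((f:ℝ) * ((b1 + b * m) * m)) := by
    rw [Matrix.mul_sub, Matrix.mul_one, Matrix.mul_smul, Matrix.trace_sub,
      Matrix.trace_smul, htrN, htrNJ]
    simp
  have hasv' : asv = σ2 * ((f : ℝ) * m - 1 - ((m : ℝ) - 1) * r) / ((f : ℝ) * m - 1) := by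
    rw [hasv, hT, hb, hb1]
    field_simp
    ring
  refine ⟨hasv', hD, ?_⟩
  rw [hasv']
  rw [div_eq_one_iff_eq (ne_of_gt hK1), eq_div_iff (ne_of_gt hD)]
end
end
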